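/- arXiv:1104.0343 — 7 statements merged into one kernel-verified Lean document; each statement's English description precedes it below -/
import Mathlib

section
/- Let r, q, a, b, c > 0, let H* = rc/(aq+bc), P* = rq/(aq+bc), and define V(H,P) = ln(H/H*) + H*/H + B(ln(P/P*) + P*/P) with B = aH*/c. Then along the Leslie-Gower system dH/dt = (r - bH - aP)H, dP/dt = (q - cP/H)P, the derivative of V along trajectories at any point (H,P) with H, P > 0 equals bH*(2 - H*/H - H/H*) + aP*(2 - P*/P - P/P*). -/
/-- The orbital derivative of the Lyapunov function
`V(H,P) = log(H/H*) + H*/H + B (log(P/P*) + P*/P)` with `B = aH*/c`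
along the Leslie-Gower system equals
`bH*(2 - H*/H - H/H*) + aP*(2 - P*/P - P/P*)`. -/
theorem leslie_gower_orbital_derivative (r q a b c H P : ℝ)
    (hr : 0 < r) (hq : 0 < q) (ha : 0 < a) (hb : 0 < b) (hc : 0 < c)
    (hH : 0 < H) (hP : 0 < P) :
    let Hs := r * c / (a * q + b * c)
    let Ps := r * q / (a * q + b * c)
    let B := a * Hs / c
    (1 / H - Hs / H ^ 2) * ((r - b * H - a * P) * H)
      + B * (1 / P - Ps / P ^ 2) * ((q - c * P / H) * P)
      = b * Hs * (2 - Hs / H - H / Hs) + a * Ps * (2 - Ps / P - P / Ps) := by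
  intro Hs Ps B
  have hd : 0 < a * q + b * c := by positivity
  simp only [Hs, Ps, B]
  field_simp
  ring
end

section
/- For the two-species Leslie-Gower system with positive parameters, the orbital derivative of the Lyapunov function V(H,P) = ln(H/H*) + H*/H + (aH*/c)(ln(P/P*) + P*/P) is strictly negative at every point (H,P) with H, P > 0 and (H,P) ≠ (H*, P*), and is zero at (H*, P*). -/
/-- The orbital derivative of the Lyapunov function of the two-species
Leslie-Gower system is strictly negative on the open positive quadrant away from
the positive equilibrium, and vanishes at the equilibrium. -/
theorem leslie_gower_orbital_derivative_neg (r q a b c : ℝ)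
    (hr : 0 < r) (hq : 0 < q) (ha : 0 < a) (hb : 0 < b) (hc : 0 < c) :
    let Hs := r * c / (a * q + b * c)
    let Ps := r * q / (a * q + b * c)
    let B := a * Hs / c
    let D : ℝ → ℝ → ℝ := fun H P =>
      (1 / H - Hs / H ^ 2) * ((r - b * H - a * P) * H)
        + B * (1 / P - Ps / P ^ 2) * ((q - c * P / H) * P)
    (∀ H P : ℝ, 0 < H → 0 < P → (H, P) ≠ (Hs, Ps) → D H P < 0) ∧ D Hs Ps = 0 := by
  intro Hs Ps B D
  have hS : 0 < a * q + b * c := by positivity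
  have hS' : a * q + b * c ≠ 0 := ne_of_gt hS
  have hHs : 0 < Hs := by positivity
  have hPs : 0 < Ps := by positivity
  have key : ∀ H P : ℝ, 0 < H → 0 < P →
      D H P = -(b * (H - Hs) ^ 2 / H + a * (P - Ps) ^ 2 / P) := by
    intro H P hH hP
    show (1 / H - Hs / H ^ 2) * ((r - b * H - a * P) * H)
        + B * (1 / P - Ps / P ^ 2) * ((q - c * P / H) * P) = _
    have hHsdef : Hs = r * c / (a * q + b * c) := rfl
    have hPsdef : Ps = r * q / (a * q + b * c) := rfl
    have hBdef : B = a * Hs / c := rfl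
    rw [hBdef, hHsdef, hPsdef]
    field_simp
    ring
  constructor
  · intro H P hH hP hne
    rw [key H P hH hP]
    have hne' : H ≠ Hs ∨ P ≠ Ps := by
      by_contra h
      push_neg at h
      exact hne (by rw [h.1, h.2])
    have h1 : 0 ≤ b * (H - Hs) ^ 2 / H := by positivity
    have h2 : 0 ≤ a * (P - Ps) ^ 2 / P := by positivity
    rcases hne' with h | h
    · have hp : 0 < (H - Hs) ^ 2 := by
        have := sub_ne_zero.mpr h
        positivity
      have h3 : 0 < b * (H - Hs) ^ 2 / H := by positivity
      linarith
    · have hp : 0 < (P - Ps) ^ 2 := by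
        have := sub_ne_zero.mpr h
        positivity
      have h3 : 0 < a * (P - Ps) ^ 2 / P := by positivity
      linarith
  · rw [key Hs Ps hHs hPs]
    simp
end

section
/- The positive equilibrium (H*, P*) = (rc/(aq+bc), rq/(aq+bc)) of the two-species Leslie-Gower system is globally asymptotically stable on the open positive orthant: every solution with positive initial data converges to (H*, P*) as t → ∞. -/
set_option maxHeartbeats 1000000


open Set Filter

lemma lg_antitoneOn (f f' : ℝ → ℝ) (s : Set ℝ) (hs : Convex ℝ s)
    (hd : ∀ t ∈ s, HasDerivAt f (f' t) t)
    (h0 : ∀ t ∈ interior s, f' t ≤ 0) :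
    AntitoneOn f s := by
  apply antitoneOn_of_deriv_nonpos hs
  · exact fun t ht => (hd t ht).continuousAt.continuousWithinAt
  · exact fun t ht => ((hd t (interior_subset ht)).differentiableAt).differentiableWithinAt
  · intro t ht
    rw [(hd t (interior_subset ht)).deriv]
    exact h0 t ht

lemma lg_monotoneOn (f f' : ℝ → ℝ) (s : Set ℝ) (hs : Convex ℝ s)
    (hd : ∀ t ∈ s, HasDerivAt f (f' t) t)
    (h0 : ∀ t ∈ interior s, 0 ≤ f' t) :
    MonotoneOn f s := by
  apply monotoneOn_of_deriv_nonneg hs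
  · exact fun t ht => (hd t ht).continuousAt.continuousWithinAt
  · exact fun t ht => ((hd t (interior_subset ht)).differentiableAt).differentiableWithinAt
  · intro t ht
    rw [(hd t (interior_subset ht)).deriv]
    exact h0 t ht

/-- If `f'` has the sign of `x - x₀` on `[A,B]`, then `f x₀` is the min on `[A,B]`. -/
lemma lg_min_of_deriv_sign (f f' : ℝ → ℝ) (A B x₀ : ℝ) (hx₀ : x₀ ∈ Icc A B)
    (hd : ∀ x ∈ Icc A B, HasDerivAt f (f' x) x)
    (hs : ∀ x ∈ Icc A B, 0 ≤ (x - x₀) * f' x) :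
    ∀ x ∈ Icc A B, f x₀ ≤ f x := by
  intro x hx
  rcases le_total x x₀ with h | h
  · have hanti : AntitoneOn f (Icc A x₀) := by
      apply lg_antitoneOn f f' _ (convex_Icc _ _)
      · exact fun t ht => hd t ⟨ht.1, ht.2.trans hx₀.2⟩
      · intro t ht
        rw [interior_Icc] at ht
        have h1 := hs t ⟨ht.1.le, ht.2.le.trans hx₀.2⟩
        nlinarith [ht.2]
    exact hanti ⟨hx.1, h⟩ ⟨hx₀.1, le_refl _⟩ h
  · have hmono : MonotoneOn f (Icc x₀ B) := by
      apply lg_monotoneOn f f' _ (convex_Icc _ _)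
      · exact fun t ht => hd t ⟨hx₀.1.trans ht.1, ht.2⟩
      · intro t ht
        rw [interior_Icc] at ht
        have h1 := hs t ⟨hx₀.1.trans ht.1.le, ht.2.le⟩
        nlinarith [ht.1]
    exact hmono ⟨le_refl _, hx₀.2⟩ ⟨h, hx.2⟩ h



lemma lg_log_sub_log_le (x y : ℝ) (hx : 0 < x) (hy : 0 < y) :
    Real.log x - Real.log y ≤ (x - y) / y := by
  have h := Real.log_le_sub_one_of_pos (show 0 < x / y by positivity)
  rw [Real.log_div hx.ne' hy.ne'] at h
  have h2 : x / y - 1 = (x - y) / y := by field_simp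
  linarith [h2 ▸ h]

/-- `ys` is the global minimum of `u y = y - ys * log y`. -/
lemma lg_u_min (ys : ℝ) (hys : 0 < ys) (y : ℝ) (hy : 0 < y) :
    ys - ys*Real.log ys ≤ y - ys*Real.log y := by
  have h := lg_log_sub_log_le y ys hy hys
  have h1 : ys*(Real.log y - Real.log ys) ≤ ys*((y-ys)/ys) :=
    mul_le_mul_of_nonneg_left h hys.le
  have h2 : ys*((y-ys)/ys) = y - ys := by field_simp
  nlinarith [h1, h2]

/-- Quadratic upper bound for `u` on `[ylo, ∞)`. -/
lemma lg_u_upper (ys ylo : ℝ) (hys : 0 < ys) (hylo : 0 < ylo) (y : ℝ) (hy : ylo ≤ y) :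
    (y - ys*Real.log y) - (ys - ys*Real.log ys) ≤ (1/ylo)*(y-ys)^2 := by
  have hy0 : 0 < y := hylo.trans_le hy
  have h := lg_log_sub_log_le ys y hys hy0
  have h1 : ys*(Real.log ys - Real.log y) ≤ ys*((ys-y)/y) :=
    mul_le_mul_of_nonneg_left h hys.le
  have h2 : ys*((ys-y)/y) = ys*(ys-y)/y := by ring
  -- u y - u ys ≤ (y-ys) + ys*(ys-y)/y = (y-ys)^2/y ≤ (y-ys)^2/ylo
  have h3 : (y - ys) + ys*(ys-y)/y = (y-ys)^2/y := by field_simp; ring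
  have h4 : (y-ys)^2/y ≤ (y-ys)^2/ylo := by
    apply div_le_div_of_nonneg_left (sq_nonneg _) hylo hy
  have h5 : (y-ys)^2/ylo = (1/ylo)*(y-ys)^2 := by ring
  linarith [h1, h2, h3, h4, h5]

/-- Quadratic lower bound for `u` on `[ylo, Y]`. -/
lemma lg_u_lower (ys ylo Y : ℝ) (hylo : 0 < ylo) (hysm : ys ∈ Icc ylo Y) :
    ∀ y ∈ Icc ylo Y, (1/(2*Y))*(y-ys)^2 ≤ (y - ys*Real.log y) - (ys - ys*Real.log ys) := by
  have hY : 0 < Y := hylo.trans_le (hysm.1.trans hysm.2)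
  have key := lg_min_of_deriv_sign
    (f := fun x => (x - ys*Real.log x) - (1/(2*Y))*(x-ys)^2)
    (f' := fun x => (1 - ys*x⁻¹) - (1/(2*Y))*(2*(x-ys)^1*1)) ylo Y ys hysm
    (fun x hx => by
      have hx0 : 0 < x := hylo.trans_le hx.1
      exact ((hasDerivAt_id x).sub ((Real.hasDerivAt_log hx0.ne').const_mul ys)).sub
        ((((hasDerivAt_id x).sub_const ys).pow 2).const_mul (1/(2*Y))))
    (fun x hx => by
      have hx0 : 0 < x := hylo.trans_le hx.1
      have hinv : 1/Y ≤ x⁻¹ := by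
        rw [inv_eq_one_div]; exact one_div_le_one_div_of_le hx0 hx.2
      have hident : 1 - ys*x⁻¹ = (x - ys)*x⁻¹ := by field_simp
      beta_reduce
      rw [hident]
      have : (x-ys)*((x-ys)*x⁻¹ - 1/(2*Y)*(2*(x-ys)^1*1))
          = (x-ys)^2*(x⁻¹ - 1/Y) := by ring
      rw [this]
      exact mul_nonneg (sq_nonneg _) (by linarith))
  intro y hy
  nlinarith [key y hy]

/-- `zs` is the global min of `g s = (c/a) s - K log (b + a s)` on `s ≥ 0`. -/
lemma lg_g_min (a b c zs K : ℝ) (ha : 0 < a) (hb : 0 < b) (hc : 0 < c) (hzs : 0 ≤ zs)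
    (hK : K*a^2 = c*(a*zs+b)) (s : ℝ) (hs : 0 ≤ s) :
    (c/a)*zs - K*Real.log (b+a*zs) ≤ (c/a)*s - K*Real.log (b+a*s) := by
  have hbs : 0 < b + a*s := by positivity
  have hbz : 0 < b + a*zs := by positivity
  have hK0 : 0 ≤ K := by nlinarith
  have h := lg_log_sub_log_le (b+a*s) (b+a*zs) hbs hbz
  have h1 : K*(Real.log (b+a*s) - Real.log (b+a*zs))
      ≤ K*(((b+a*s)-(b+a*zs))/(b+a*zs)) := mul_le_mul_of_nonneg_left h hK0
  have h2 : K*(((b+a*s)-(b+a*zs))/(b+a*zs)) = (c/a)*(s-zs) := by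
    field_simp
    linear_combination (s-zs)*hK
  nlinarith [h1, h2]

/-- Quadratic upper bound for `g` on `s ≥ 0`. -/
lemma lg_g_upper (a b c zs K : ℝ) (ha : 0 < a) (hb : 0 < b) (hc : 0 < c) (hzs : 0 ≤ zs)
    (hK : K*a^2 = c*(a*zs+b)) (s : ℝ) (hs : 0 ≤ s) :
    ((c/a)*s - K*Real.log (b+a*s)) - ((c/a)*zs - K*Real.log (b+a*zs))
      ≤ (c/b)*(s-zs)^2 := by
  have hbs : 0 < b + a*s := by positivity
  have hbz : 0 < b + a*zs := by positivity
  have hK0 : 0 ≤ K := by nlinarith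
  have h := lg_log_sub_log_le (b+a*zs) (b+a*s) hbz hbs
  have h1 : K*(Real.log (b+a*zs) - Real.log (b+a*s))
      ≤ K*(((b+a*zs)-(b+a*s))/(b+a*s)) := mul_le_mul_of_nonneg_left h hK0
  -- (c/a)(s-zs) + K*(a(zs-s))/(b+a*s) = c(s-zs)^2/(b+a*s) ≤ (c/b)(s-zs)^2
  have h2 : (c/a)*(s-zs) + K*(((b+a*zs)-(b+a*s))/(b+a*s)) = c*(s-zs)^2/(b+a*s) := by
    field_simp
    linear_combination (-(s-zs))*hK
  have h3 : c*(s-zs)^2/(b+a*s) ≤ (c/b)*(s-zs)^2 := by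
    rw [div_le_iff₀ hbs]
    have : (c/b)*(s-zs)^2*(b+a*s) = c*(s-zs)^2 + (c/b)*(s-zs)^2*(a*s) := by
      field_simp
    rw [this]
    have : 0 ≤ (c/b)*(s-zs)^2*(a*s) := by positivity
    linarith
  nlinarith [h1, h2, h3]

/-- Quadratic lower bound for `g` on `[0, Z]`. -/
lemma lg_g_lower (a b c zs K Z : ℝ) (ha : 0 < a) (hb : 0 < b) (hc : 0 < c)
    (hzsm : zs ∈ Icc 0 Z) (hK : K*a^2 = c*(a*zs+b)) :
    ∀ s ∈ Icc 0 Z, (c/(2*(b+a*Z)))*(s-zs)^2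
      ≤ ((c/a)*s - K*Real.log (b+a*s)) - ((c/a)*zs - K*Real.log (b+a*zs)) := by
  have hZ : 0 ≤ Z := hzsm.1.trans hzsm.2
  have hβZ : 0 < b + a*Z := by positivity
  have key := lg_min_of_deriv_sign
    (f := fun x => ((c/a)*x - K*Real.log (b+a*x)) - (c/(2*(b+a*Z)))*(x-zs)^2)
    (f' := fun x => ((c/a)*1 - K*((a*1)/(b+a*x))) - (c/(2*(b+a*Z)))*(2*(x-zs)^1*1))
    0 Z zs hzsm
    (fun x hx => by
      have hbx : 0 < b + a*x := by have := hx.1; positivity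
      exact (((hasDerivAt_id x).const_mul (c/a)).sub
          ((((hasDerivAt_id x).const_mul a).const_add b).log hbx.ne' |>.const_mul K)).sub
        ((((hasDerivAt_id x).sub_const zs).pow 2).const_mul (c/(2*(b+a*Z)))))
    (fun x hx => by
      have hbx : 0 < b + a*x := by have := hx.1; positivity
      have hident : (c/a)*1 - K*((a*1)/(b+a*x)) = c*(x-zs)/(b+a*x) := by
        field_simp
        linear_combination (-1)*hK
      beta_reduce
      rw [hident]
      have hfrac : c/(b+a*Z) ≤ c/(b+a*x) := by
        apply div_le_div_of_nonneg_left hc.le hbx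
        nlinarith [hx.2]
      have hexp : (x-zs)*(c*(x-zs)/(b+a*x) - c/(2*(b+a*Z))*(2*(x-zs)^1*1))
          = (x-zs)^2*(c/(b+a*x) - c/(b+a*Z)) := by
        field_simp
      rw [hexp]
      exact mul_nonneg (sq_nonneg _) (by linarith))
  intro s hs
  nlinarith [key s hs]

open Set

/-- Master pointwise decay inequality for the perturbed Lyapunov function. -/
lemma lg_master (a b c zs ys Z Y k κ G μ ε : ℝ)
    (ha : 0 < a) (hb : 0 < b) (hc : 0 < c) (hys : 0 < ys)
    (hZ : 0 < Z) (hY : 0 < Y) (hk : 0 < k)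
    (hκ : κ*(b+a*Z) = c^2*k)
    (hG : G = c*(Z + k))
    (hμpos : 0 < μ) (hμ : μ*(2*c*Y + G^2/b + 1) ≤ κ)
    (hε : ε = min (κ/2) (μ*b/2))
    (z y : ℝ) (hz0 : 0 ≤ z) (hzZ : z ≤ Z) (hy0 : 0 < y) (hyY : y ≤ Y)
    (φ : ℝ) (hφ : φ = -(c*(z - zs)*(z + k))) :
    c*(z-zs)*φ/(b+a*z) + μ*(-((b+a*z)*(y-ys)^2) - φ*(y-ys) + c*y*(z-zs)^2)
      ≤ -(ε*((y-ys)^2+(z-zs)^2)) := by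
  have hβ : 0 < b + a*z := by positivity
  have hβZ : b + a*z ≤ b + a*Z := by nlinarith
  have hβZ0 : 0 < b + a*Z := hβ.trans_le hβZ
  have hG0 : 0 < G := by rw [hG]; positivity
  have hκ0 : 0 < κ := by
    have : 0 < c^2*k := by positivity
    nlinarith
  -- step 1 : c*(z-zs)*φ ≤ -(c^2*k)*(z-zs)^2
  have h1 : c*(z-zs)*φ ≤ -((c^2*k)*(z-zs)^2) := by
    rw [hφ]; nlinarith [mul_nonneg (sq_nonneg (c*(z-zs))) hz0]
  have h1' : c*(z-zs)*φ ≤ 0 := by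
    refine h1.trans ?_
    nlinarith [mul_nonneg (sq_nonneg (z-zs)) (mul_nonneg (sq_nonneg c) hk.le)]
  -- step 2 : c*(z-zs)*φ/(b+a*z) ≤ -κ*(z-zs)^2
  have h2 : c*(z-zs)*φ/(b+a*z) ≤ -(κ*(z-zs)^2) := by
    have hA : c*(z-zs)*φ/(b+a*z) ≤ c*(z-zs)*φ/(b+a*Z) := by
      rw [div_le_div_iff₀ hβ hβZ0]
      nlinarith [mul_nonneg (neg_nonneg.2 h1') (sub_nonneg.2 hβZ)]
    have hB : c*(z-zs)*φ/(b+a*Z) ≤ (-((c^2*k)*(z-zs)^2))/(b+a*Z) :=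
      (div_le_div_iff_of_pos_right hβZ0).2 h1
    have hC : (-((c^2*k)*(z-zs)^2))/(b+a*Z) = -(κ*(z-zs)^2) := by
      rw [div_eq_iff hβZ0.ne', ← hκ]; ring
    linarith [hA, hB, hC.le, hC.ge]
  -- step 3 : cross term bound
  have h31 : c*(z + k) ≤ G := by rw [hG]; nlinarith
  have h32 : 0 ≤ c*(z + k) := by positivity
  have h3 : -(φ*(y-ys)) ≤ G^2/(2*b)*(z-zs)^2 + b/2*(y-ys)^2 := by
    rw [hφ]
    have hgoal : c*(z + k)*((z-zs)*(y-ys)) ≤ G^2/(2*b)*(z-zs)^2 + b/2*(y-ys)^2 := by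
      rcases le_total 0 ((z-zs)*(y-ys)) with hwe | hwe
      · have hstep : c*(z + k)*((z-zs)*(y-ys)) ≤ G*((z-zs)*(y-ys)) :=
          mul_le_mul_of_nonneg_right h31 hwe
        refine hstep.trans ?_
        have key : 0 ≤ (G*(z-zs) - b*(y-ys))^2 := sq_nonneg _
        have h2b : (0:ℝ) < 2*b := by positivity
        set d := G^2/(2*b) with hdd
        have hd : d*(2*b) = G^2 := by rw [hdd]; field_simp
        have hG2 : G^2*(z-zs)^2 = d*(2*b)*(z-zs)^2 := by rw [hd]
        have hmain : 2*b*(G*((z-zs)*(y-ys))) ≤ 2*b*(d*(z-zs)^2 + b/2*(y-ys)^2) := by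
          nlinarith [key, hG2]
        exact le_of_mul_le_mul_left hmain h2b
      · have h0 : c*(z + k)*((z-zs)*(y-ys)) ≤ 0 :=
          mul_nonpos_of_nonneg_of_nonpos h32 hwe
        refine h0.trans ?_
        positivity
    nlinarith [hgoal]
  -- combine
  have h4 : c*y*(z-zs)^2 ≤ c*Y*(z-zs)^2 := by
    nlinarith [mul_nonneg (mul_nonneg hc.le (sub_nonneg.2 hyY)) (sq_nonneg (z-zs))]
  have h5 : -((b+a*z)*(y-ys)^2) ≤ -(b*(y-ys)^2) := by
    nlinarith [mul_nonneg (mul_nonneg ha.le hz0) (sq_nonneg (y-ys))]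
  have hcoef : μ*(G^2/(2*b) + c*Y) ≤ κ/2 := by
    have hG2b : 0 ≤ G^2/b := by positivity
    have hhalf : G^2/(2*b) = (G^2/b)/2 := by ring
    rw [hhalf]
    nlinarith [hμ, hμpos]
  have hε1 : ε ≤ κ/2 := hε ▸ min_le_left _ _
  have hε2 : ε ≤ μ*b/2 := hε ▸ min_le_right _ _
  have hμ' : μ*(-((b+a*z)*(y-ys)^2) - φ*(y-ys) + c*y*(z-zs)^2)
      ≤ μ*((G^2/(2*b) + c*Y)*(z-zs)^2 - (b/2)*(y-ys)^2) := by
    apply mul_le_mul_of_nonneg_left ?_ hμpos.le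
    nlinarith [h3, h4, h5]
  have hfin : μ*((G^2/(2*b) + c*Y)*(z-zs)^2 - (b/2)*(y-ys)^2)
      ≤ (κ/2)*(z-zs)^2 - (μ*b/2)*(y-ys)^2 := by
    have := mul_le_mul_of_nonneg_right hcoef (sq_nonneg (z-zs))
    linarith
  linarith [h2, hμ'.trans hfin,
    mul_le_mul_of_nonneg_right hε1 (sq_nonneg (z-zs)),
    mul_le_mul_of_nonneg_right hε2 (sq_nonneg (y-ys))]

lemma lg_Vd_identity (r q a b c H P zs ys K k z Pd Hd zd : ℝ)
    (hq : 0 < q) (ha : 0 < a) (hb : 0 < b) (hc : 0 < c) (hH : 0 < H) (hP : 0 < P)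
    (hD : 0 < a*q + b*c)
    (hzs : zs = q/c) (hys : ys = r*q/(a*q+b*c)) (hK : K = c*(a*zs+b)/a^2)
    (hk : k = b*ys/q)
    (hz : z = P/H) (hPd : Pd = (q - c*P/H)*P) (hHd : Hd = (r - b*H - a*P)*H)
    (hzd : zd = (Pd*H - P*Hd)/H^2) :
    (Pd - ys*(Pd/P)) + ((c/a)*zd - K*((a*zd)/(b+a*z)))
      = c*(z - zs)*(-(c*(z-zs)*(z+k)))/(b+a*z) := by
  have hβ : 0 < b + a*z := by rw [hz]; positivity
  subst hzd hHd hPd hz hk hK hys hzs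
  field_simp
  ring

lemma lg_Sd_identity (r q a b c H P zs ys k z Pd Hd zd : ℝ)
    (hq : 0 < q) (ha : 0 < a) (hb : 0 < b) (hc : 0 < c) (hH : 0 < H) (hP : 0 < P)
    (hD : 0 < a*q + b*c)
    (hzs : zs = q/c) (hys : ys = r*q/(a*q+b*c)) (hk : k = b*ys/q)
    (hz : z = P/H) (hPd : Pd = (q - c*P/H)*P) (hHd : Hd = (r - b*H - a*P)*H)
    (hzd : zd = (Pd*H - P*Hd)/H^2) :
    -(zd*(P - ys) + (z - zs)*Pd)
      = -((b+a*z)*(P-ys)^2) - (-(c*(z-zs)*(z+k)))*(P-ys) + c*P*(z-zs)^2 := by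
  subst hzd hHd hPd hz hk hys hzs
  field_simp
  ring

lemma lg_log_sub_log_le' (x y : ℝ) (hx : 0 < x) (hy : 0 < y) :
    Real.log x - Real.log y ≤ (x - y) / y := by
  have h := Real.log_le_sub_one_of_pos (show 0 < x / y by positivity)
  rw [Real.log_div hx.ne' hy.ne'] at h
  have h2 : x / y - 1 = (x - y) / y := by field_simp
  linarith [h2 ▸ h]

lemma lg_u_coercive_low (ys Bu : ℝ) (hys : 0 < ys) (y : ℝ) (hy : 0 < y)
    (h : y - ys*Real.log y ≤ Bu) : Real.exp (-(Bu/ys)) ≤ y := by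
  have h1 : -(Bu/ys) ≤ Real.log y := by
    rw [neg_le, le_div_iff₀ hys]
    nlinarith [h, hy]
  calc Real.exp (-(Bu/ys)) ≤ Real.exp (Real.log y) := Real.exp_le_exp.2 h1
    _ = y := Real.exp_log hy

lemma lg_u_coercive_up (ys Bu : ℝ) (hys : 0 < ys) (y : ℝ) (hy : 0 < y)
    (h : y - ys*Real.log y ≤ Bu) : y ≤ 2*(Bu - ys + ys*Real.log (2*ys)) := by
  have h1 := Real.log_le_sub_one_of_pos (show 0 < y/(2*ys) by positivity)
  rw [Real.log_div hy.ne' (by positivity : (2*ys:ℝ) ≠ 0)] at h1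
  have h2 : ys*(Real.log y - Real.log (2*ys)) ≤ ys*(y/(2*ys) - 1) :=
    mul_le_mul_of_nonneg_left h1 hys.le
  have h3 : ys*(y/(2*ys) - 1) = y/2 - ys := by field_simp
  linarith

lemma lg_g_coercive (a b c zs K Bg : ℝ) (ha : 0 < a) (hb : 0 < b) (hc : 0 < c)
    (hzs : 0 ≤ zs) (hK : K*a^2 = c*(a*zs+b)) (s : ℝ) (hs : 0 ≤ s)
    (h : (c/a)*s - K*Real.log (b+a*s) ≤ Bg) :
    s ≤ (2*a/c)*(Bg + K*b/(2*(a*zs+b)) - K + K*Real.log (2*(a*zs+b))) := by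
  have hM : (0:ℝ) < 2*(a*zs+b) := by positivity
  have hbs : 0 < b + a*s := by positivity
  have hK0 : 0 ≤ K := by nlinarith
  have h1 := Real.log_le_sub_one_of_pos (show 0 < (b+a*s)/(2*(a*zs+b)) by positivity)
  rw [Real.log_div hbs.ne' hM.ne'] at h1
  have h2 : K*(Real.log (b+a*s) - Real.log (2*(a*zs+b)))
      ≤ K*((b+a*s)/(2*(a*zs+b)) - 1) := mul_le_mul_of_nonneg_left h1 hK0
  have h3 : K*((b+a*s)/(2*(a*zs+b)) - 1) = K*b/(2*(a*zs+b)) + (c/(2*a))*s - K := by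
    field_simp [(show a*zs+b ≠ 0 by positivity)]
    linear_combination s*hK
  -- so (c/(2a)) s ≤ Bg + Kb/M - K + K log M
  have hca : c/a*s = 2*((c/(2*a))*s) := by field_simp
  have h4 : (c/(2*a))*s ≤ Bg + K*b/(2*(a*zs+b)) - K + K*Real.log (2*(a*zs+b)) := by
    linarith
  have h5 : (2*a/c)*((c/(2*a))*s) = s := by field_simp
  linarith [mul_le_mul_of_nonneg_left h4 (show (0:ℝ) ≤ 2*a/c by positivity), h5]
/-- Global asymptotic stability of the positive equilibrium of the two-species
Leslie-Gower system: every solution staying in the open positive quadrant for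
all `t ≥ 0` converges to `(H*, P*)`. -/
theorem leslie_gower_global_stability (r q a b c : ℝ)
    (hr : 0 < r) (hq : 0 < q) (ha : 0 < a) (hb : 0 < b) (hc : 0 < c)
    (H P : ℝ → ℝ)
    (hpos : ∀ t : ℝ, 0 ≤ t → 0 < H t ∧ 0 < P t)
    (hODE : ∀ t : ℝ, 0 ≤ t →
      HasDerivAt H ((r - b * H t - a * P t) * H t) t ∧
      HasDerivAt P ((q - c * P t / H t) * P t) t) :
    Filter.Tendsto H Filter.atTop (nhds (r * c / (a * q + b * c))) ∧
    Filter.Tendsto P Filter.atTop (nhds (r * q / (a * q + b * c))) := by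
  have hD : (0:ℝ) < a*q + b*c := by positivity
  set zs := q/c with hzs_def
  set ys := r*q/(a*q+b*c) with hys_def
  set K := c*(a*zs+b)/a^2 with hK_def
  set k := b*ys/q with hk_def
  set z : ℝ → ℝ := fun t => P t / H t with hz_def
  set Pd : ℝ → ℝ := fun t => (q - c * P t / H t) * P t with hPd_def
  set Hd : ℝ → ℝ := fun t => (r - b * H t - a * P t) * H t with hHd_def
  set zd : ℝ → ℝ := fun t => (Pd t * H t - P t * Hd t) / (H t)^2 with hzd_def
  set V : ℝ → ℝ := fun t =>
    (P t - ys*Real.log (P t)) + ((c/a)*(z t) - K*Real.log (b+a*(z t))) with hV_def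
  set Vd : ℝ → ℝ := fun t =>
    c*(z t - zs)*(-(c*(z t - zs)*(z t + k)))/(b + a*(z t)) with hVd_def
  set S : ℝ → ℝ := fun t => -((z t - zs)*(P t - ys)) with hS_def
  set Sd : ℝ → ℝ := fun t =>
    -((b+a*(z t))*(P t - ys)^2) - (-(c*(z t - zs)*(z t + k)))*(P t - ys)
      + c*(P t)*(z t - zs)^2 with hSd_def
  clear_value zs ys K k z Pd Hd zd V Vd S Sd
  -- expansion lemmas
  have hzexp : ∀ s, z s = P s / H s := fun s => by rw [hz_def]
  have hPdexp : ∀ s, Pd s = (q - c * P s / H s) * P s := fun s => by rw [hPd_def]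
  have hHdexp : ∀ s, Hd s = (r - b * H s - a * P s) * H s := fun s => by rw [hHd_def]
  have hzdexp : ∀ s, zd s = (Pd s * H s - P s * Hd s) / (H s)^2 := fun s => by rw [hzd_def]
  have hVexp : ∀ s, V s =
      (P s - ys*Real.log (P s)) + ((c/a)*(z s) - K*Real.log (b+a*(z s))) :=
    fun s => by rw [hV_def]
  have hVdexp : ∀ s, Vd s =
      c*(z s - zs)*(-(c*(z s - zs)*(z s + k)))/(b + a*(z s)) := fun s => by rw [hVd_def]
  have hSexp : ∀ s, S s = -((z s - zs)*(P s - ys)) := fun s => by rw [hS_def]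
  have hSdexp : ∀ s, Sd s =
      -((b+a*(z s))*(P s - ys)^2) - (-(c*(z s - zs)*(z s + k)))*(P s - ys)
        + c*(P s)*(z s - zs)^2 := fun s => by rw [hSd_def]
  have hzs0 : 0 < zs := by rw [hzs_def]; positivity
  have hys0 : 0 < ys := by rw [hys_def]; positivity
  have hK : K*a^2 = c*(a*zs+b) := by rw [hK_def]; field_simp
  have hk0 : 0 < k := by rw [hk_def]; positivity
  have hHt : ∀ t, 0 ≤ t → 0 < H t := fun t ht => (hpos t ht).1
  have hPt : ∀ t, 0 ≤ t → 0 < P t := fun t ht => (hpos t ht).2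
  have hzt : ∀ t, 0 ≤ t → 0 < z t := by
    intro t ht; rw [hzexp t]; exact div_pos (hPt t ht) (hHt t ht)
  have hβt : ∀ t, 0 ≤ t → 0 < b + a*(z t) := by
    intro t ht; have := hzt t ht; positivity
  -- derivatives
  have hzD : ∀ t, 0 ≤ t → HasDerivAt z (zd t) t := by
    intro t ht
    rw [hz_def, hzdexp t, hPdexp t, hHdexp t]
    exact (hODE t ht).2.div (hODE t ht).1 (hHt t ht).ne'
  have hVD : ∀ t, 0 ≤ t → HasDerivAt V (Vd t) t := by
    intro t ht
    have hH0 := hHt t ht; have hP0 := hPt t ht; have hβ := hβt t ht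
    have hP' : HasDerivAt P (Pd t) t := by
      rw [hPdexp t]; exact (hODE t ht).2
    have hz' := hzD t ht
    have hraw : HasDerivAt (fun s =>
        (P s - ys*Real.log (P s)) + ((c/a)*(z s) - K*Real.log (b+a*(z s))))
        ((Pd t - ys*(Pd t / P t)) + ((c/a)*zd t - K*((a*zd t)/(b+a*(z t))))) t := by
      apply HasDerivAt.add
      · exact hP'.sub ((hP'.log hP0.ne').const_mul ys)
      · exact (hz'.const_mul (c/a)).sub
          ((((hz'.const_mul a).const_add b).log hβ.ne').const_mul K)
    have hid := lg_Vd_identity r q a b c (H t) (P t) zs ys K k (z t) (Pd t) (Hd t) (zd t)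
      hq ha hb hc hH0 hP0 hD hzs_def hys_def hK_def hk_def
      (hzexp t) (hPdexp t) (hHdexp t) (hzdexp t)
    rw [hid] at hraw
    rw [hV_def, hVdexp t]
    exact hraw
  have hSD : ∀ t, 0 ≤ t → HasDerivAt S (Sd t) t := by
    intro t ht
    have hH0 := hHt t ht; have hP0 := hPt t ht
    have hP' : HasDerivAt P (Pd t) t := by
      rw [hPdexp t]; exact (hODE t ht).2
    have hz' := hzD t ht
    have hraw : HasDerivAt (fun s => -((z s - zs)*(P s - ys)))
        (-(zd t*(P t - ys) + (z t - zs)*(Pd t))) t :=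
      ((hz'.sub_const zs).mul (hP'.sub_const ys)).neg
    have hid := lg_Sd_identity r q a b c (H t) (P t) zs ys k (z t) (Pd t) (Hd t) (zd t)
      hq ha hb hc hH0 hP0 hD hzs_def hys_def hk_def
      (hzexp t) (hPdexp t) (hHdexp t) (hzdexp t)
    rw [hid] at hraw
    rw [hS_def, hSdexp t]
    exact hraw
  -- V non-increasing
  have hVd_nonpos : ∀ t, 0 ≤ t → Vd t ≤ 0 := by
    intro t ht
    have hz0 := hzt t ht; have hβ := hβt t ht
    rw [hVdexp t]
    have hnum : c*(z t - zs)*(-(c*(z t - zs)*(z t + k))) ≤ 0 := by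
      nlinarith only [mul_nonneg (sq_nonneg (c*(z t - zs))) (add_pos hz0 hk0).le, hz0, hk0, hc, sq_nonneg (z t - zs)]
    exact div_nonpos_iff.mpr (Or.inr ⟨hnum, hβ.le⟩)
  have hVanti : AntitoneOn V (Set.Ici 0) := by
    apply lg_antitoneOn V Vd _ (convex_Ici 0) (fun t ht => hVD t ht)
    intro t ht
    rw [interior_Ici] at ht
    exact hVd_nonpos t ht.le
  have hVle : ∀ t, 0 ≤ t → V t ≤ V 0 := fun t ht =>
    hVanti Set.self_mem_Ici ht ht
  -- region bounds
  have hgmin : ∀ s, 0 ≤ s → (c/a)*zs - K*Real.log (b+a*zs) ≤ (c/a)*s - K*Real.log (b+a*s) :=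
    lg_g_min a b c zs K ha hb hc hzs0.le hK
  have humin : ∀ y, 0 < y → ys - ys*Real.log ys ≤ y - ys*Real.log y :=
    lg_u_min ys hys0
  set Bu := V 0 - ((c/a)*zs - K*Real.log (b+a*zs)) with hBu_def
  set Bg := V 0 - (ys - ys*Real.log ys) with hBg_def
  clear_value Bu Bg
  have hu_le : ∀ t, 0 ≤ t → P t - ys*Real.log (P t) ≤ Bu := by
    intro t ht
    have h1 := hVle t ht
    rw [hVexp t] at h1
    have h2 := hgmin (z t) (hzt t ht).le
    rw [hBu_def]; linarith only [h1, h2]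
  have hg_le : ∀ t, 0 ≤ t → (c/a)*(z t) - K*Real.log (b+a*(z t)) ≤ Bg := by
    intro t ht
    have h1 := hVle t ht
    rw [hVexp t] at h1
    have h2 := humin (P t) (hPt t ht)
    rw [hBg_def]; linarith only [h1, h2]
  have hu_ys_le : ys - ys*Real.log ys ≤ Bu := by
    have h1 := humin (P 0) (hPt 0 le_rfl)
    have h2 := hu_le 0 le_rfl
    linarith only [h1, h2]
  have hg_zs_le : (c/a)*zs - K*Real.log (b+a*zs) ≤ Bg := by
    have h1 := hgmin (z 0) (hzt 0 le_rfl).le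
    have h2 := hg_le 0 le_rfl
    linarith only [h1, h2]
  set ylo := Real.exp (-(Bu/ys)) with hylo_def
  set Y := 2*(Bu - ys + ys*Real.log (2*ys)) with hY_def
  set Z := (2*a/c)*(Bg + K*b/(2*(a*zs+b)) - K + K*Real.log (2*(a*zs+b))) with hZ_def
  clear_value ylo Y Z
  have hylo0 : 0 < ylo := by rw [hylo_def]; exact Real.exp_pos _
  have hPylo : ∀ t, 0 ≤ t → ylo ≤ P t := fun t ht => by
    rw [hylo_def]; exact lg_u_coercive_low ys Bu hys0 (P t) (hPt t ht) (hu_le t ht)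
  have hPY : ∀ t, 0 ≤ t → P t ≤ Y := fun t ht => by
    rw [hY_def]; exact lg_u_coercive_up ys Bu hys0 (P t) (hPt t ht) (hu_le t ht)
  have hysylo : ylo ≤ ys := by
    rw [hylo_def]; exact lg_u_coercive_low ys Bu hys0 ys hys0 hu_ys_le
  have hysY : ys ≤ Y := by
    rw [hY_def]; exact lg_u_coercive_up ys Bu hys0 ys hys0 hu_ys_le
  have hY0 : 0 < Y := hys0.trans_le hysY
  have hzZ : ∀ t, 0 ≤ t → z t ≤ Z := fun t ht => by
    rw [hZ_def]
    exact lg_g_coercive a b c zs K Bg ha hb hc hzs0.le hK (z t) (hzt t ht).le (hg_le t ht)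
  have hzsZ : zs ≤ Z := by
    rw [hZ_def]
    exact lg_g_coercive a b c zs K Bg ha hb hc hzs0.le hK zs hzs0.le hg_zs_le
  have hZ0 : 0 < Z := hzs0.trans_le hzsZ
  -- constants
  have hβZ0 : 0 < b + a*Z := by positivity
  set κ := c^2*k/(b+a*Z) with hκ_def
  set G := c*(Z + k) with hG_def
  clear_value κ G
  have hκ : κ*(b+a*Z) = c^2*k := by rw [hκ_def]; field_simp
  have hκ0 : 0 < κ := by rw [hκ_def]; positivity
  have hG0 : 0 < G := by rw [hG_def]; positivity
  have hden0 : (0:ℝ) < 2*c*Y + G^2/b + 1 := by positivity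
  set μ := min (min (1/(2*Y)) (c/(2*(b+a*Z)))) (κ/(2*c*Y + G^2/b + 1)) with hμ_def
  clear_value μ
  have hμ0 : 0 < μ := by
    rw [hμ_def]
    exact lt_min (lt_min (by positivity) (by positivity)) (by positivity)
  have hμ1 : μ ≤ 1/(2*Y) := hμ_def ▸ (min_le_left _ _).trans (min_le_left _ _)
  have hμ2 : μ ≤ c/(2*(b+a*Z)) := hμ_def ▸ (min_le_left _ _).trans (min_le_right _ _)
  have hμ3 : μ*(2*c*Y + G^2/b + 1) ≤ κ := by
    have h : μ ≤ κ/(2*c*Y + G^2/b + 1) := hμ_def ▸ min_le_right _ _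
    rw [le_div_iff₀ hden0] at h
    exact h
  set ε := min (κ/2) (μ*b/2) with hε_def
  clear_value ε
  have hε0 : 0 < ε := by
    rw [hε_def]; exact lt_min (by positivity) (by positivity)
  set C2 := 1/ylo + c/b + μ with hC2_def
  clear_value C2
  have hC20 : 0 < C2 := by rw [hC2_def]; positivity
  set lam := ε/C2 with hlam_def
  clear_value lam
  have hlam0 : 0 < lam := by rw [hlam_def]; positivity
  have hlamC2 : lam*C2 = ε := by rw [hlam_def]; field_simp
  -- the perturbed Lyapunov function
  set Q : ℝ → ℝ := fun t => (P t - ys)^2 + (z t - zs)^2 with hQ_def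
  set Df : ℝ → ℝ := fun t =>
    V t + μ*S t - ((ys - ys*Real.log ys) + ((c/a)*zs - K*Real.log (b+a*zs))) with hDf_def
  clear_value Q Df
  have hQexp : ∀ s, Q s = (P s - ys)^2 + (z s - zs)^2 := fun s => by rw [hQ_def]
  have hDfexp : ∀ s, Df s =
      V s + μ*S s - ((ys - ys*Real.log ys) + ((c/a)*zs - K*Real.log (b+a*zs))) :=
    fun s => by rw [hDf_def]
  have hmaster : ∀ t, 0 ≤ t → Vd t + μ*Sd t ≤ -(ε*Q t) := by
    intro t ht
    rw [hVdexp t, hSdexp t, hQexp t]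
    exact lg_master a b c zs ys Z Y k κ G μ ε ha hb hc hys0 hZ0 hY0 hk0 hκ hG_def
      hμ0 hμ3 hε_def (z t) (P t) (hzt t ht).le (hzZ t ht) (hPt t ht) (hPY t ht) _ rfl
  have hDub : ∀ t, 0 ≤ t → Df t ≤ C2*Q t := by
    intro t ht
    have h1 := lg_u_upper ys ylo hys0 hylo0 (P t) (hPylo t ht)
    have h2 := lg_g_upper a b c zs K ha hb hc hzs0.le hK (z t) (hzt t ht).le
    have h3 : μ*(-((z t - zs)*(P t - ys))) ≤ μ/2*(P t - ys)^2 + μ/2*(z t - zs)^2 := by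
      nlinarith only [mul_nonneg hμ0.le (sq_nonneg (z t - zs + (P t - ys)))]
    have hres : 0 ≤ (c/b + μ/2)*(P t - ys)^2 + (1/ylo + μ/2)*(z t - zs)^2 := by positivity
    rw [hDfexp t, hQexp t, hVexp t, hSexp t, hC2_def]
    linarith only [h1, h2, h3, hres]
  have hDlb : ∀ t, 0 ≤ t → (μ/2)*Q t ≤ Df t := by
    intro t ht
    have h1 := lg_u_lower ys ylo Y hylo0 (Set.mem_Icc.mpr ⟨hysylo, hysY⟩) (P t)
      (Set.mem_Icc.mpr ⟨hPylo t ht, hPY t ht⟩)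
    have h2 := lg_g_lower a b c zs K Z ha hb hc (Set.mem_Icc.mpr ⟨hzs0.le, hzsZ⟩) hK (z t)
      (Set.mem_Icc.mpr ⟨(hzt t ht).le, hzZ t ht⟩)
    have h3 : -(μ/2*(P t - ys)^2 + μ/2*(z t - zs)^2) ≤ μ*(-((z t - zs)*(P t - ys))) := by
      nlinarith only [mul_nonneg hμ0.le (sq_nonneg (z t - zs - (P t - ys)))]
    have h4 := mul_le_mul_of_nonneg_right hμ1 (sq_nonneg (P t - ys))
    have h5 := mul_le_mul_of_nonneg_right hμ2 (sq_nonneg (z t - zs))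
    rw [hDfexp t, hQexp t, hVexp t, hSexp t]
    linarith only [h1, h2, h3, h4, h5]
  have hDD : ∀ t, 0 ≤ t → HasDerivAt Df (Vd t + μ*Sd t) t := by
    intro t ht
    rw [hDf_def]
    exact ((hVD t ht).add ((hSD t ht).const_mul μ)).sub_const _
  -- Gronwall
  set E : ℝ → ℝ := fun t => Df t * Real.exp (lam*t) with hE_def
  clear_value E
  have hEexp : ∀ s, E s = Df s * Real.exp (lam*s) := fun s => by rw [hE_def]
  have hED : ∀ t, 0 ≤ t →
      HasDerivAt E ((Vd t + μ*Sd t)*Real.exp (lam*t) + Df t*(Real.exp (lam*t)*lam)) t := by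
    intro t ht
    have hexp : HasDerivAt (fun s => Real.exp (lam*s)) (Real.exp (lam*t)*lam) t := by
      have := ((hasDerivAt_id' t).const_mul lam).exp
      rw [mul_one] at this
      exact this
    rw [hE_def]
    exact (hDD t ht).mul hexp
  have hE_nonpos : ∀ t ∈ interior (Set.Ici (0:ℝ)),
      (Vd t + μ*Sd t)*Real.exp (lam*t) + Df t*(Real.exp (lam*t)*lam) ≤ 0 := by
    intro t ht
    rw [interior_Ici] at ht
    have ht0 := (Set.mem_Ioi.mp ht).le
    have h1 := hmaster t ht0
    have h2 := hDub t ht0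
    have h4 : lam*(C2*Q t) = ε*Q t := by rw [← hlamC2]; ring
    have hDexp : (Vd t + μ*Sd t) + lam*Df t ≤ 0 := by
      have h3 := mul_le_mul_of_nonneg_left h2 hlam0.le
      linarith only [h1, h3, h4]
    have hexp0 : (0:ℝ) < Real.exp (lam*t) := Real.exp_pos _
    have hmm := mul_le_mul_of_nonneg_right hDexp hexp0.le
    have hzero : (0:ℝ)*Real.exp (lam*t) = 0 := by ring
    rw [hzero] at hmm
    linarith only [hmm]
  have hEanti : AntitoneOn E (Set.Ici 0) :=
    lg_antitoneOn E _ _ (convex_Ici 0) (fun t ht => hED t ht) hE_nonpos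
  have hbound : ∀ t, 0 ≤ t → Df t ≤ Df 0 * Real.exp (-(lam*t)) := by
    intro t ht
    have h : E t ≤ E 0 := hEanti Set.self_mem_Ici ht ht
    rw [hEexp t, hEexp 0] at h
    have hE0 : Real.exp (lam*0) = 1 := by norm_num
    rw [hE0, mul_one] at h
    have h2 := mul_le_mul_of_nonneg_right h (Real.exp_pos (-(lam*t))).le
    have h3 : Df t*Real.exp (lam*t)*Real.exp (-(lam*t)) = Df t := by
      rw [mul_assoc, ← Real.exp_add]; simp
    rw [h3] at h2
    exact h2
  -- limits
  have hexp_lim : Filter.Tendsto (fun t : ℝ => Real.exp (-(lam*t))) Filter.atTop (nhds 0) := by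
    apply Real.tendsto_exp_atBot.comp
    exact tendsto_neg_atTop_atBot.comp (Filter.Tendsto.const_mul_atTop hlam0 Filter.tendsto_id)
  have hQlim : Filter.Tendsto Q Filter.atTop (nhds 0) := by
    have hg : Filter.Tendsto (fun t : ℝ => (2/μ)*Df 0 * Real.exp (-(lam*t)))
        Filter.atTop (nhds 0) := by
      simpa using hexp_lim.const_mul ((2/μ)*Df 0)
    apply squeeze_zero' ?_ ?_ hg
    · refine (Filter.eventually_ge_atTop 0).mono fun t ht => ?_
      rw [hQexp t]
      positivity
    · refine (Filter.eventually_ge_atTop 0).mono fun t ht => ?_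
      have h1 := hDlb t ht
      have h2 := hbound t ht
      have h3 := mul_le_mul_of_nonneg_left (h1.trans h2) (by positivity : (0:ℝ) ≤ 2/μ)
      have h4 : (2/μ)*((μ/2)*Q t) = Q t := by field_simp
      calc Q t = (2/μ)*((μ/2)*Q t) := h4.symm
        _ ≤ (2/μ)*(Df 0 * Real.exp (-(lam*t))) := h3
        _ = (2/μ)*Df 0 * Real.exp (-(lam*t)) := by ring
  have hsq_lim : ∀ (f : ℝ → ℝ),
      (∀ t, 0 ≤ t → (f t)^2 ≤ Q t) → Filter.Tendsto f Filter.atTop (nhds 0) := by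
    intro f hf
    have h1 : Filter.Tendsto (fun t => (f t)^2) Filter.atTop (nhds 0) := by
      apply squeeze_zero' ?_ ?_ hQlim
      · exact (Filter.eventually_ge_atTop 0).mono fun t _ => sq_nonneg _
      · exact (Filter.eventually_ge_atTop 0).mono fun t ht => hf t ht
    have h2 : Filter.Tendsto (fun t => |f t|) Filter.atTop (nhds 0) := by
      have := h1.sqrt
      simpa [Real.sqrt_sq_eq_abs] using this
    exact tendsto_zero_iff_norm_tendsto_zero.mpr (by simpa [Real.norm_eq_abs] using h2)
  have hPlim : Filter.Tendsto P Filter.atTop (nhds ys) := by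
    have h1 : Filter.Tendsto (fun t => P t - ys) Filter.atTop (nhds 0) := by
      apply hsq_lim
      intro t ht
      rw [hQexp t]
      linarith only [sq_nonneg (z t - zs)]
    have h2 := h1.add (tendsto_const_nhds (α := ℝ) (x := ys))
    simpa using h2
  have hzlim : Filter.Tendsto z Filter.atTop (nhds zs) := by
    have h1 : Filter.Tendsto (fun t => z t - zs) Filter.atTop (nhds 0) := by
      apply hsq_lim
      intro t ht
      rw [hQexp t]
      linarith only [sq_nonneg (P t - ys)]
    have h2 := h1.add (tendsto_const_nhds (α := ℝ) (x := zs))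
    simpa using h2
  have hHlim : Filter.Tendsto H Filter.atTop (nhds (r * c / (a * q + b * c))) := by
    have hdiv := hPlim.div hzlim hzs0.ne'
    have heq : ys/zs = r*c/(a*q+b*c) := by
      rw [hys_def, hzs_def]; field_simp
    rw [heq] at hdiv
    apply hdiv.congr'
    refine (Filter.eventually_ge_atTop 0).mono fun t ht => ?_
    have hH0 := (hHt t ht).ne'
    have hP0 := (hPt t ht).ne'
    show P t / z t = H t
    rw [hzexp t]
    field_simp
  exact ⟨hHlim, hPlim⟩
end

section
/- For the three-species Leslie-Gower food chain dH/dt = (r - bH - aP₁)H, dP₁/dt = (q₁ - c₁P₁/H - s₁P₂)P₁, dP₂/dt = (q₂ - c₂P₂/P₁)P₂ with all parameters positive, there exists a unique equilibrium (H*, P₁*, P₂*) with all three coordinates positive. -/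
set_option maxHeartbeats 1000000 in
/-- The three-species Leslie-Gower food chain has a unique equilibrium with all
coordinates positive. -/
theorem leslie_gower_three_species_unique_equilibrium
    (r b a q₁ c₁ s₁ q₂ c₂ : ℝ)
    (hr : 0 < r) (hb : 0 < b) (ha : 0 < a) (hq₁ : 0 < q₁) (hc₁ : 0 < c₁)
    (hs₁ : 0 < s₁) (hq₂ : 0 < q₂) (hc₂ : 0 < c₂) :
    ∃! E : ℝ × ℝ × ℝ, 0 < E.1 ∧ 0 < E.2.1 ∧ 0 < E.2.2 ∧
      r = b * E.1 + a * E.2.1 ∧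
      q₁ = c₁ * E.2.1 / E.1 + s₁ * E.2.2 ∧
      q₂ = c₂ * E.2.2 / E.2.1 := by
  obtain ⟨A, hAdef⟩ : ∃ A : ℝ, A = s₁ * q₂ * a := ⟨_, rfl⟩
  obtain ⟨B, hBdef⟩ : ∃ B : ℝ, B = c₁ * b * c₂ + s₁ * q₂ * r + q₁ * a * c₂ := ⟨_, rfl⟩
  obtain ⟨C, hCdef⟩ : ∃ C : ℝ, C = q₁ * r * c₂ := ⟨_, rfl⟩
  have hA : 0 < A := by rw [hAdef]; positivity
  have hB : 0 < B := by rw [hBdef]; positivity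
  have hC : 0 < C := by rw [hCdef]; positivity
  have hD : 0 < B ^ 2 - 4 * A * C := by
    rw [hAdef, hBdef, hCdef]
    nlinarith [sq_nonneg (s₁ * q₂ * r - q₁ * a * c₂),
      mul_pos (mul_pos (mul_pos (mul_pos ha hr) hc₁) hb) (mul_pos hc₂ hc₂),
      mul_pos (mul_pos hc₁ hb) hc₂, mul_pos (mul_pos hs₁ hq₂) hr,
      mul_pos (mul_pos hq₁ ha) hc₂]
  obtain ⟨s, hsdef⟩ : ∃ s : ℝ, s = Real.sqrt (B ^ 2 - 4 * A * C) := ⟨_, rfl⟩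
  have hs : s ^ 2 = B ^ 2 - 4 * A * C := by rw [hsdef]; exact Real.sq_sqrt hD.le
  have hspos : 0 < s := by rw [hsdef]; exact Real.sqrt_pos.2 hD
  have hsB : s < B := by
    rw [hsdef]
    exact (Real.sqrt_lt' hB).2 (by nlinarith [mul_pos hA hC])
  obtain ⟨x, hxdef⟩ : ∃ x : ℝ, x = (B - s) / (2 * A) := ⟨_, rfl⟩
  have hx0 : 0 < x := by rw [hxdef]; exact div_pos (by linarith) (by positivity)
  have hxe : x * (2 * A) = B - s := by rw [hxdef]; exact div_mul_cancel₀ _ (by positivity)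
  have h4 : 4 * A * (A * x ^ 2 - B * x + C) = 0 := by
    linear_combination (2 * A * x - B - s) * hxe + hs
  have gx : A * x ^ 2 - B * x + C = 0 :=
    (mul_eq_zero.1 h4).resolve_left (by positivity)
  have hBs : B - 2 * (s₁ * q₂) * r < s := by
    rcases le_or_gt (B - 2 * (s₁ * q₂) * r) 0 with h | h
    · linarith
    · have hsq : (B - 2 * (s₁ * q₂) * r) ^ 2 < s ^ 2 := by
        have key : s ^ 2 - (B - 2 * (s₁ * q₂) * r) ^ 2
            = 4 * (s₁ * q₂ * r * (c₁ * b * c₂)) := by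
          rw [hs, hAdef, hBdef, hCdef]; ring
        have hpos : 0 < s₁ * q₂ * r * (c₁ * b * c₂) := by positivity
        linarith
      exact lt_of_pow_lt_pow_left₀ 2 hspos.le hsq
  have hxr : a * x < r := by
    have h1 : (2 * (s₁ * q₂)) * (a * x) < (2 * (s₁ * q₂)) * r := by
      have : x * (2 * A) < 2 * (s₁ * q₂) * r := by linarith
      rw [hAdef] at this; nlinarith [this]
    exact lt_of_mul_lt_mul_left h1 (by positivity)
  refine ⟨((r - a * x) / b, x, q₂ * x / c₂),
    ⟨div_pos (by linarith) hb, hx0, by positivity, ?_, ?_, ?_⟩, ?_⟩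
  · field_simp; ring
  · have hne : r - a * x ≠ 0 := by intro h; linarith
    have hne2 : r - x * a ≠ 0 := by intro h; linarith
    have gx' := gx
    rw [hAdef, hBdef, hCdef] at gx'
    simp only
    field_simp
    linear_combination gx'
  · field_simp
  · rintro ⟨H', y, Z⟩ ⟨hH', hy, hZ, e1, e2, e3⟩
    simp only at e1 e2 e3 hH' hy hZ ⊢
    have hyr : a * y < r := by nlinarith
    have hH'e : H' = (r - a * y) / b := by field_simp; linarith
    have hZe : Z = q₂ * y / c₂ := by
      field_simp at e3
      field_simp
      linarith
    have hne' : r - a * y ≠ 0 := by intro h; linarith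
    rw [hH'e, hZe] at e2
    have hne'' : r - y * a ≠ 0 := by intro h; linarith
    field_simp [hne', hne''] at e2
    have gy : A * y ^ 2 - B * y + C = 0 := by
      rw [hAdef, hBdef, hCdef]; linear_combination e2
    have hxy : y = x := by
      rcases mul_eq_zero.1 (show (x - y) * (A * (x + y) - B) = 0 by
          linear_combination gx - gy) with h | hsum
      · linarith
      · exfalso
        have hsum' : A * (x + y) = B := by linarith
        have hxyprod : A * (x * y) = C := by linear_combination x * hsum' - gx
        have hpos : 0 < (r - a * x) * (r - a * y) :=
          mul_pos (by linarith) (by linarith)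
        have key : A * ((r - a * x) * (r - a * y)) = -(a * r * (c₁ * b * c₂)) := by
          linear_combination (-(a * r)) * hsum' + a ^ 2 * hxyprod + r ^ 2 * hAdef
            + (-(a * r)) * hBdef + a ^ 2 * hCdef
        have h1 : 0 < A * ((r - a * x) * (r - a * y)) := mul_pos hA hpos
        have h2 : 0 < a * r * (c₁ * b * c₂) := by positivity
        linarith
    subst hxy
    simp [hH'e, hZe]
end

section
/- The Leslie-Gower food chain of n+1 levels with all parameters positive has a unique equilibrium state with all coordinates positive, i.e., the system of equations r = bH + aP₁, qᵢ = cᵢPᵢ/Pᵢ₋₁ + sᵢPᵢ₊₁ for 1 ≤ i ≤ n-1 (with P₀ := H), and qₙ = cₙPₙ/Pₙ₋₁ has exactly one solution with H, P₁, ..., Pₙ all positive. -/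
/-- The equilibrium equations for the `n+1` level Leslie-Gower food chain.
Here `H` is the prey population and `P i` (for `i = 1,…,n`, with `P 0 = H`)
are the predator populations. -/
def chainEquilibrium (n : ℕ) (r b a : ℝ) (q c s : ℕ → ℝ) (P : ℕ → ℝ) : Prop :=
  r = b * P 0 + a * P 1 ∧
  (∀ i, 1 ≤ i → i ≤ n - 1 → q i = c i * P i / P (i - 1) + s i * P (i + 1)) ∧
  q n = c n * P n / P (n - 1)


private lemma twoStep {P : ℕ → Prop} (h0 : P 0) (h1 : P 1)
    (hstep : ∀ k, P k → P (k+1) → P (k+2)) : ∀ k, P k := by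
  have h : ∀ k, P k ∧ P (k+1) := by
    intro k
    induction k with
    | zero => exact ⟨h0, h1⟩
    | succ m ih => exact ⟨ih.2, hstep m ih.1 ih.2⟩
  exact fun k => (h k).1

noncomputable def Fc (n : ℕ) (q c s : ℕ → ℝ) : ℕ → ℝ → ℝ
  | 0, t => t
  | 1, t => c n * t / q n
  | (k+2), t => c (n-k-1) * Fc n q c s (k+1) t / (q (n-k-1) - s (n-k-1) * Fc n q c s k t)

def Dom (n : ℕ) (q c s : ℕ → ℝ) (t : ℝ) : Prop :=
  ∀ k, k + 2 ≤ n → 0 < q (n-k-1) - s (n-k-1) * Fc n q c s k t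

lemma Fc_zero (n : ℕ) (q c s : ℕ → ℝ) (t : ℝ) : Fc n q c s 0 t = t := rfl
lemma Fc_one (n : ℕ) (q c s : ℕ → ℝ) (t : ℝ) : Fc n q c s 1 t = c n * t / q n := rfl
lemma Fc_two (n : ℕ) (q c s : ℕ → ℝ) (k : ℕ) (t : ℝ) :
    Fc n q c s (k+2) t =
      c (n-k-1) * Fc n q c s (k+1) t / (q (n-k-1) - s (n-k-1) * Fc n q c s k t) := rfl

section LG

variable {n : ℕ} {q c s : ℕ → ℝ}
  (hn : 1 ≤ n)
  (hq : ∀ i, 1 ≤ i → i ≤ n → 0 < q i)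
  (hc : ∀ i, 1 ≤ i → i ≤ n → 0 < c i)
  (hs : ∀ i, 1 ≤ i → i ≤ n - 1 → 0 < s i)

include hn hq hc

lemma Fpos {t : ℝ} (ht : 0 < t) (hD : Dom n q c s t) :
    ∀ k, k ≤ n → 0 < Fc n q c s k t := by
  apply twoStep
  · intro _; simpa [Fc_zero] using ht
  · intro h1
    have h2 := hq n hn le_rfl
    have h3 := hc n hn le_rfl
    rw [Fc_one]; positivity
  · intro k ih1 ih2 hk
    have hcpos := hc (n-k-1) (by omega) (by omega)
    have hFpos := ih2 (by omega)
    have hd := hD k (by omega)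
    rw [Fc_two]
    positivity

include hs

lemma Fmono {t₁ t₂ : ℝ} (h1 : 0 < t₁) (h12 : t₁ < t₂) (hD : Dom n q c s t₂) :
    ∀ k, k ≤ n → Fc n q c s k t₁ < Fc n q c s k t₂ := by
  have key : ∀ k, k ≤ n → Fc n q c s k t₁ < Fc n q c s k t₂ ∧ 0 < Fc n q c s k t₁ := by
    apply twoStep
    · intro _; rw [Fc_zero, Fc_zero]; exact ⟨h12, h1⟩
    · intro _
      have h2 := hq n hn le_rfl
      have h3 := hc n hn le_rfl
      rw [Fc_one, Fc_one]
      constructor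
      · gcongr
      · positivity
    · intro k ih1 ih2 hk
      have hik := ih1 (by omega)
      have hik1 := ih2 (by omega)
      have hcpos := hc (n-k-1) (by omega) (by omega)
      have hspos := hs (n-k-1) (by omega) (by omega)
      have hd2 := hD k (by omega)
      have hd1 : 0 < q (n-k-1) - s (n-k-1) * Fc n q c s k t₁ := by nlinarith [hik.1]
      rw [Fc_two, Fc_two]
      constructor
      · have hnum : c (n-k-1) * Fc n q c s (k+1) t₁ < c (n-k-1) * Fc n q c s (k+1) t₂ :=
          (mul_lt_mul_iff_right₀ hcpos).2 hik1.1
        calc c (n-k-1) * Fc n q c s (k+1) t₁ / (q (n-k-1) - s (n-k-1) * Fc n q c s k t₁)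
            ≤ c (n-k-1) * Fc n q c s (k+1) t₁ / (q (n-k-1) - s (n-k-1) * Fc n q c s k t₂) := by
              apply div_le_div_of_nonneg_left (mul_pos hcpos hik1.2).le hd2
              nlinarith [hik.1]
          _ < c (n-k-1) * Fc n q c s (k+1) t₂ / (q (n-k-1) - s (n-k-1) * Fc n q c s k t₂) :=
              div_lt_div_of_pos_right hnum hd2 |>.trans_le le_rfl
      · exact div_pos (mul_pos hcpos hik1.2) hd1
  exact fun k hk => (key k hk).1

end LG

section LG2

variable {n : ℕ} {q c s : ℕ → ℝ}
  (hn : 1 ≤ n)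
  (hq : ∀ i, 1 ≤ i → i ≤ n → 0 < q i)
  (hc : ∀ i, 1 ≤ i → i ≤ n → 0 < c i)
  (hs : ∀ i, 1 ≤ i → i ≤ n - 1 → 0 < s i)

include hn hq hc hs

lemma DomMono {t₁ t₂ : ℝ} (h1 : 0 < t₁) (h12 : t₁ < t₂) (hD : Dom n q c s t₂) :
    Dom n q c s t₁ := by
  intro k hk
  have := Fmono hn hq hc hs h1 h12 hD k (by omega)
  have hspos := hs (n-k-1) (by omega) (by omega)
  have := hD k hk
  nlinarith

/-- linear-in-`t` upper bound via a reference point. -/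
lemma Fratio {t tb : ℝ} (ht : 0 < t) (htt : t ≤ tb) (hD : Dom n q c s tb) :
    ∀ k, k ≤ n → Fc n q c s k t * tb ≤ Fc n q c s k tb * t := by
  rcases eq_or_lt_of_le htt with rfl | hlt
  · intro k _; ring_nf; exact le_rfl
  have hDt : Dom n q c s t := DomMono hn hq hc hs ht hlt hD
  have htb : 0 < tb := ht.trans hlt
  apply twoStep
  · intro _; rw [Fc_zero]; ring_nf; exact le_rfl
  · intro _; rw [Fc_one, Fc_one]; apply le_of_eq; ring
  · intro k ih1 ih2 hk
    have hik := ih1 (by omega)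
    have hik1 := ih2 (by omega)
    have hcpos := hc (n-k-1) (by omega) (by omega)
    have hspos := hs (n-k-1) (by omega) (by omega)
    have hd2 := hD k (by omega)
    have hd1 := hDt k (by omega)
    have hF1t := Fpos hn hq hc ht hDt (k+1) (by omega)
    have hFkt := Fpos hn hq hc ht hDt k (by omega)
    have hFkb := Fpos hn hq hc htb hD k (by omega)
    have hF1b := Fpos hn hq hc htb hD (k+1) (by omega)
    -- F k t ≤ F k tb
    have hkle : Fc n q c s k t ≤ Fc n q c s k tb := by
      have h := hik
      nlinarith
    have hdle : q (n-k-1) - s (n-k-1) * Fc n q c s k tb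
        ≤ q (n-k-1) - s (n-k-1) * Fc n q c s k t := by nlinarith
    rw [Fc_two, Fc_two]
    rw [div_mul_eq_mul_div, div_mul_eq_mul_div]
    rw [div_le_div_iff₀ hd1 hd2]
    have e1 : c (n-k-1) * Fc n q c s (k+1) t * tb ≤ c (n-k-1) * Fc n q c s (k+1) tb * t := by
      nlinarith
    have h2 := mul_le_mul_of_nonneg_right e1 hd2.le
    have h3 : c (n-k-1) * Fc n q c s (k+1) tb * t * (q (n-k-1) - s (n-k-1) * Fc n q c s k tb)
        ≤ c (n-k-1) * Fc n q c s (k+1) tb * t * (q (n-k-1) - s (n-k-1) * Fc n q c s k t) := by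
      apply mul_le_mul_of_nonneg_left hdle
      positivity
    linarith

end LG2

noncomputable def Lw (n : ℕ) (q c : ℕ → ℝ) : ℕ → ℝ
  | 0 => 1
  | 1 => c n / q n
  | (k+2) => c (n-k-1) / q (n-k-1) * Lw n q c (k+1)

noncomputable def Aw (r b : ℝ) (q c : ℕ → ℝ) : ℕ → ℝ
  | 0 => r / b
  | (j+1) => q (j+1) / c (j+1) * Aw r b q c j

section LG3

variable {n : ℕ} {r b a : ℝ} {q c s : ℕ → ℝ}
  (hn : 1 ≤ n)
  (hq : ∀ i, 1 ≤ i → i ≤ n → 0 < q i)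
  (hc : ∀ i, 1 ≤ i → i ≤ n → 0 < c i)
  (hs : ∀ i, 1 ≤ i → i ≤ n - 1 → 0 < s i)

include hn hq hc

lemma Lpos : ∀ k, k ≤ n → 0 < Lw n q c k := by
  apply twoStep
  · intro _; rw [Lw]; norm_num
  · intro _; rw [Lw]; exact div_pos (hc n hn le_rfl) (hq n hn le_rfl)
  · intro k ih1 ih2 hk
    rw [Lw]
    exact mul_pos (div_pos (hc _ (by omega) (by omega)) (hq _ (by omega) (by omega)))
      (ih2 (by omega))

omit hn in
lemma Apos (hr : 0 < r) (hb : 0 < b) : ∀ j, j + 1 ≤ n → 0 < Aw r b q c j := by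
  intro j
  induction j with
  | zero => intro _; rw [Aw]; positivity
  | succ m ih =>
    intro hm
    rw [Aw]
    exact mul_pos (div_pos (hq _ (by omega) (by omega)) (hc _ (by omega) (by omega)))
      (ih (by omega))

include hs

lemma FcLow {t : ℝ} (ht : 0 < t) (hD : Dom n q c s t) :
    ∀ k, k ≤ n → Lw n q c k * t ≤ Fc n q c s k t := by
  apply twoStep
  · intro _; rw [Lw, Fc_zero]; norm_num
  · intro _; rw [Lw, Fc_one]; apply le_of_eq; ring
  · intro k ih1 ih2 hk
    have hcpos := hc (n-k-1) (by omega) (by omega)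
    have hqpos := hq (n-k-1) (by omega) (by omega)
    have hspos := hs (n-k-1) (by omega) (by omega)
    have hd := hD k (by omega)
    have hFk := Fpos hn hq hc ht hD k (by omega)
    have hF1 := Fpos hn hq hc ht hD (k+1) (by omega)
    have hL1 := Lpos hn hq hc (k+1) (by omega) (q := q) (c := c)
    rw [Lw, Fc_two]
    have hdq : q (n-k-1) - s (n-k-1) * Fc n q c s k t ≤ q (n-k-1) := by nlinarith
    calc c (n-k-1) / q (n-k-1) * Lw n q c (k+1) * t
        ≤ c (n-k-1) / q (n-k-1) * Fc n q c s (k+1) t := by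
          rw [mul_assoc]
          apply mul_le_mul_of_nonneg_left _ (div_pos hcpos hqpos).le
          exact ih2 (by omega)
      _ = c (n-k-1) * Fc n q c s (k+1) t / q (n-k-1) := by ring
      _ ≤ c (n-k-1) * Fc n q c s (k+1) t / (q (n-k-1) - s (n-k-1) * Fc n q c s k t) := by
          exact div_le_div_of_nonneg_left (mul_pos hcpos hF1).le hd hdq

end LG3

section LG4

variable {n : ℕ} {q c s : ℕ → ℝ}
  (hn : 1 ≤ n)
  (hq : ∀ i, 1 ≤ i → i ≤ n → 0 < q i)
  (hc : ∀ i, 1 ≤ i → i ≤ n → 0 < c i)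
  (hs : ∀ i, 1 ≤ i → i ≤ n - 1 → 0 < s i)

include hn hq hc hs

lemma exists_small_dom : ∃ t : ℝ, 0 < t ∧ Dom n q c s t := by
  have main : ∀ m, m ≤ n → ∃ ε C : ℝ, 0 < ε ∧ 0 < C ∧ ∀ t, 0 < t → t ≤ ε →
      (∀ k, k ≤ m → 0 < Fc n q c s k t ∧ Fc n q c s k t ≤ C * t) ∧
      (∀ k, k + 2 ≤ m → q (n-k-1)/2 ≤ q (n-k-1) - s (n-k-1) * Fc n q c s k t) := by
    intro m
    induction m with
    | zero =>
      intro _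
      refine ⟨1, 1, one_pos, one_pos, fun t ht _ => ⟨fun k hk => ?_, fun k hk => by omega⟩⟩
      interval_cases k
      rw [Fc_zero]; exact ⟨ht, by linarith⟩
    | succ m ih =>
      intro hm
      obtain ⟨ε, C, hε, hC, hP⟩ := ih (by omega)
      match m with
      | 0 =>
        have hcn := hc n hn le_rfl
        have hqn := hq n hn le_rfl
        refine ⟨ε, max C (c n / q n), hε, lt_max_of_lt_left hC, fun t ht htε => ?_⟩
        obtain ⟨h1, h2⟩ := hP t ht htε
        refine ⟨fun k hk => ?_, fun k hk => by omega⟩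
        interval_cases k
        · obtain ⟨ha1, ha2⟩ := h1 0 le_rfl
          exact ⟨ha1, ha2.trans (by nlinarith [le_max_left C (c n / q n)])⟩
        · rw [Fc_one]
          refine ⟨by positivity, ?_⟩
          have : c n * t / q n = (c n / q n) * t := by ring
          rw [this]
          exact mul_le_mul_of_nonneg_right (le_max_right _ _) ht.le
      | m' + 1 =>
        -- m + 1 = m' + 2
        set i := n - m' - 1 with hi
        have hqi := hq i (by omega) (by omega)
        have hci := hc i (by omega) (by omega)
        have hsi := hs i (by omega) (by omega)
        refine ⟨min ε (q i / (2 * s i * C)), max C (2 * c i * C / q i),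
          lt_min hε (by positivity), lt_max_of_lt_left hC, fun t ht htε => ?_⟩
        obtain ⟨h1, h2⟩ := hP t ht (htε.trans (min_le_left _ _))
        have hdm' : q i / 2 ≤ q i - s i * Fc n q c s m' t := by
          obtain ⟨hm1, hm2⟩ := h1 m' (by omega)
          have htb : t ≤ q i / (2 * s i * C) := htε.trans (min_le_right _ _)
          have : s i * Fc n q c s m' t ≤ q i / 2 := by
            calc s i * Fc n q c s m' t ≤ s i * (C * t) := by nlinarith
              _ ≤ s i * (C * (q i / (2 * s i * C))) := by
                  apply mul_le_mul_of_nonneg_left _ hsi.le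
                  exact mul_le_mul_of_nonneg_left htb hC.le
              _ = q i / 2 := by field_simp
          linarith
        have hdm'pos : 0 < q i - s i * Fc n q c s m' t := by linarith
        constructor
        · intro k hk
          rcases Nat.lt_or_ge k (m'+2) with hk' | hk'
          · obtain ⟨ha1, ha2⟩ := h1 k (by omega)
            exact ⟨ha1, ha2.trans (mul_le_mul_of_nonneg_right (le_max_left _ _) ht.le)⟩
          · have hkeq : k = m' + 2 := by omega
            subst hkeq
            obtain ⟨hb1, hb2⟩ := h1 (m'+1) (by omega)
            rw [Fc_two, ← hi]
            refine ⟨div_pos (mul_pos hci hb1) hdm'pos, ?_⟩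
            calc c i * Fc n q c s (m'+1) t / (q i - s i * Fc n q c s m' t)
                ≤ c i * Fc n q c s (m'+1) t / (q i / 2) :=
                  div_le_div_of_nonneg_left (mul_pos hci hb1).le (by positivity) hdm'
              _ ≤ c i * (C * t) / (q i / 2) := by
                  apply div_le_div_of_nonneg_right _ (by positivity)
                  exact mul_le_mul_of_nonneg_left hb2 hci.le
              _ = (2 * c i * C / q i) * t := by field_simp
              _ ≤ max C (2 * c i * C / q i) * t :=
                  mul_le_mul_of_nonneg_right (le_max_right _ _) ht.le
        · intro k hk
          rcases Nat.lt_or_ge (k+2) (m'+2) with hk' | hk'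
          · exact h2 k (by omega)
          · have hkeq : k = m' := by omega
            subst hkeq
            exact hdm'
  obtain ⟨ε, C, hε, hC, hP⟩ := main n le_rfl
  refine ⟨ε, hε, fun k hk => ?_⟩
  have := (hP ε hε le_rfl).2 k hk
  have hqi := hq (n-k-1) (by omega) (by omega)
  linarith

end LG4

section LG5

variable {n : ℕ} {r b a : ℝ} {q c s : ℕ → ℝ}
  (hn : 1 ≤ n)
  (hq : ∀ i, 1 ≤ i → i ≤ n → 0 < q i)
  (hc : ∀ i, 1 ≤ i → i ≤ n → 0 < c i)
  (hs : ∀ i, 1 ≤ i → i ≤ n - 1 → 0 < s i)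

lemma Fc_zero_fun : Fc n q c s 0 = fun u => u := funext fun u => rfl
lemma Fc_one_fun : Fc n q c s 1 = fun u => c n * u / q n := funext fun u => rfl
lemma Fc_two_fun (k : ℕ) : Fc n q c s (k+2) =
    fun u => c (n-k-1) * Fc n q c s (k+1) u / (q (n-k-1) - s (n-k-1) * Fc n q c s k u) :=
  funext fun u => rfl

lemma Fcont {t : ℝ} (hD : Dom n q c s t) :
    ∀ k, k ≤ n → ContinuousAt (Fc n q c s k) t := by
  apply twoStep
  · intro _; rw [Fc_zero_fun]; exact continuousAt_id
  · intro _; rw [Fc_one_fun]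
    exact (continuousAt_const.mul continuousAt_id).div_const (q n)
  · intro k ih1 ih2 hk
    rw [Fc_two_fun]
    have hd := hD k (by omega)
    exact (continuousAt_const.mul (ih2 (by omega))).div
      (continuousAt_const.sub (continuousAt_const.mul (ih1 (by omega)))) hd.ne'

end LG5

section LG6

variable {n : ℕ} {r b a : ℝ} {q c s : ℕ → ℝ}
  (hn : 1 ≤ n)
  (hr : 0 < r) (hb : 0 < b) (ha : 0 < a)
  (hq : ∀ i, 1 ≤ i → i ≤ n → 0 < q i)
  (hc : ∀ i, 1 ≤ i → i ≤ n → 0 < c i)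
  (hs : ∀ i, 1 ≤ i → i ≤ n - 1 → 0 < s i)
  (hbd : ∀ t, 0 < t → Dom n q c s t →
    b * Fc n q c s n t + a * Fc n q c s (n-1) t < r)

include hn hr hb ha hq hc hs hbd

lemma FcUpper : ∀ t, 0 < t → Dom n q c s t →
    ∀ j, j + 1 ≤ n → Fc n q c s (n-j) t ≤ Aw r b q c j := by
  intro t ht hD j
  induction j with
  | zero =>
    intro _
    have h1 := hbd t ht hD
    have h2 := Fpos hn hq hc ht hD (n-1) (by omega)
    rw [Nat.sub_zero, Aw]
    rw [le_div_iff₀ hb]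
    nlinarith
  | succ j ih =>
    intro hj
    have hAj := ih (by omega)
    set k := n - j - 2 with hk
    have ek2 : n - j = k + 2 := by omega
    have ek1 : n - (j+1) = k + 1 := by omega
    have ei : n - k - 1 = j + 1 := by omega
    have hqj := hq (j+1) (by omega) (by omega)
    have hcj := hc (j+1) (by omega) (by omega)
    have hsj := hs (j+1) (by omega) (by omega)
    have hd : 0 < q (j+1) - s (j+1) * Fc n q c s k t := by
      have := hD k (by omega); rwa [ei] at this
    have hFk := Fpos hn hq hc ht hD k (by omega)
    have hF1 := Fpos hn hq hc ht hD (k+1) (by omega)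
    have hF2 := Fpos hn hq hc ht hD (k+2) (by omega)
    have heq : Fc n q c s (k+2) t * (q (j+1) - s (j+1) * Fc n q c s k t)
        = c (j+1) * Fc n q c s (k+1) t := by
      rw [Fc_two, ei]; field_simp
    rw [ek1, Aw]
    have hA2 : Fc n q c s (k+2) t ≤ Aw r b q c j := by rw [← ek2]; exact hAj
    have hdq : q (j+1) - s (j+1) * Fc n q c s k t ≤ q (j+1) := by nlinarith
    have hApos := Apos hq hc hr hb j (by omega)
    -- Fc (k+1) t = Fc(k+2) t * d / c(j+1) ≤ Aw j * q(j+1) / c(j+1)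
    have h3 : c (j+1) * Fc n q c s (k+1) t ≤ c (j+1) * (q (j+1) / c (j+1) * Aw r b q c j) := by
      rw [← heq]
      have : c (j+1) * (q (j+1) / c (j+1) * Aw r b q c j) = Aw r b q c j * q (j+1) := by
        field_simp
      rw [this]
      calc Fc n q c s (k+2) t * (q (j+1) - s (j+1) * Fc n q c s k t)
          ≤ Fc n q c s (k+2) t * q (j+1) := by nlinarith
        _ ≤ Aw r b q c j * q (j+1) := by nlinarith
    exact le_of_mul_le_mul_left h3 hcj

lemma tUpper : ∀ t, 0 < t → Dom n q c s t → t ≤ q n / c n * Aw r b q c (n-1) := by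
  intro t ht hD
  have hqn := hq n hn le_rfl
  have hcn := hc n hn le_rfl
  have h1 : Fc n q c s 1 t ≤ Aw r b q c (n-1) := by
    have := FcUpper hn hr hb ha hq hc hs hbd t ht hD (n-1) (by omega)
    rwa [show n - (n-1) = 1 by omega] at this
  have e : t = q n / c n * Fc n q c s 1 t := by rw [Fc_one]; field_simp
  rw [e]
  exact mul_le_mul_of_nonneg_left h1 (by positivity)

end LG6

open Filter Topology in
private lemma le_at_sup {f : ℝ → ℝ} {T tlo v : ℝ} (hcont : ContinuousAt f T) (htlo : tlo < T)
    (hbnd : ∀ t, tlo ≤ t → t < T → v ≤ f t) : v ≤ f T := by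
  have h1 : Tendsto f (𝓝[<] T) (𝓝 (f T)) := hcont.tendsto.mono_left nhdsWithin_le_nhds
  have h3 : ∀ᶠ t in 𝓝[<] T, tlo < t :=
    eventually_nhdsWithin_of_eventually_nhds (eventually_gt_nhds htlo)
  have h4 : ∀ᶠ t in 𝓝[<] T, t < T := eventually_mem_nhdsWithin
  exact ge_of_tendsto h1 ((h3.and h4).mono fun t ⟨ht1, ht2⟩ => hbnd t ht1.le ht2)

open Filter Topology in
lemma exists_ge {n : ℕ} {r b a : ℝ} {q c s : ℕ → ℝ}
    (hn : 1 ≤ n)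
    (hr : 0 < r) (hb : 0 < b) (ha : 0 < a)
    (hq : ∀ i, 1 ≤ i → i ≤ n → 0 < q i)
    (hc : ∀ i, 1 ≤ i → i ≤ n → 0 < c i)
    (hs : ∀ i, 1 ≤ i → i ≤ n - 1 → 0 < s i) :
    ∃ t, 0 < t ∧ Dom n q c s t ∧
      r ≤ b * Fc n q c s n t + a * Fc n q c s (n-1) t := by
  by_contra hcon
  push_neg at hcon
  have hbd : ∀ t, 0 < t → Dom n q c s t →
      b * Fc n q c s n t + a * Fc n q c s (n-1) t < r := fun t ht hD => hcon t ht hD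
  set S : Set ℝ := {t : ℝ | 0 < t ∧ Dom n q c s t} with hS
  obtain ⟨t₀, ht₀, hD₀⟩ := exists_small_dom hn hq hc hs
  have ht₀S : t₀ ∈ S := ⟨ht₀, hD₀⟩
  have hSne : S.Nonempty := ⟨t₀, ht₀S⟩
  have hbdd : BddAbove S := by
    refine ⟨q n / c n * Aw r b q c (n-1), fun t ht => ?_⟩
    exact tUpper hn hr hb ha hq hc hs hbd t ht.1 ht.2
  set T := sSup S with hT
  have ht₀T : t₀ ≤ T := le_csSup hbdd ht₀S
  have hTpos : 0 < T := lt_of_lt_of_le ht₀ ht₀T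
  have hIlt : ∀ t, 0 < t → t < T → Dom n q c s t := by
    intro t ht htT
    obtain ⟨u, huS, htu⟩ := exists_lt_of_lt_csSup hSne htT
    exact DomMono hn hq hc hs ht htu huS.2
  set tlo := t₀ / 2 with htlo_def
  have htlo : 0 < tlo := by positivity
  have htloT : tlo < T := by rw [htlo_def]; linarith
  -- lower bound on denominators on [tlo, T)
  have hdlow : ∀ k, k + 2 ≤ n → ∀ t, tlo ≤ t → t < T →
      c (n-k-1) * (Lw n q c (k+1) * tlo) / Aw r b q c (n-k-2)
        ≤ q (n-k-1) - s (n-k-1) * Fc n q c s k t := by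
    intro k hk t ht1 ht2
    have ht : 0 < t := lt_of_lt_of_le htlo ht1
    have hD := hIlt t ht ht2
    have hd := hD k hk
    have hci := hc (n-k-1) (by omega) (by omega)
    have hF1 := Fpos hn hq hc ht hD (k+1) (by omega)
    have hF2 := Fpos hn hq hc ht hD (k+2) (by omega)
    have heq : Fc n q c s (k+2) t * (q (n-k-1) - s (n-k-1) * Fc n q c s k t)
        = c (n-k-1) * Fc n q c s (k+1) t := by
      rw [Fc_two]; field_simp
    have hA : Fc n q c s (k+2) t ≤ Aw r b q c (n-k-2) := by
      have := FcUpper hn hr hb ha hq hc hs hbd t ht hD (n-k-2) (by omega)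
      rwa [show n - (n-k-2) = k + 2 by omega] at this
    have hApos : 0 < Aw r b q c (n-k-2) := Apos hq hc hr hb (n-k-2) (by omega)
    have hnum : c (n-k-1) * (Lw n q c (k+1) * tlo) ≤ c (n-k-1) * Fc n q c s (k+1) t := by
      have hL := FcLow hn hq hc hs ht hD (k+1) (by omega)
      have hLpos := Lpos hn hq hc (k+1) (by omega) (q := q) (c := c)
      have : Lw n q c (k+1) * tlo ≤ Lw n q c (k+1) * t :=
        mul_le_mul_of_nonneg_left ht1 hLpos.le
      nlinarith
    calc c (n-k-1) * (Lw n q c (k+1) * tlo) / Aw r b q c (n-k-2)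
        ≤ c (n-k-1) * Fc n q c s (k+1) t / Aw r b q c (n-k-2) :=
          div_le_div_of_nonneg_right hnum hApos.le
      _ ≤ c (n-k-1) * Fc n q c s (k+1) t / Fc n q c s (k+2) t := by
          apply div_le_div_of_nonneg_left (mul_pos hci hF1).le hF2 hA
      _ = q (n-k-1) - s (n-k-1) * Fc n q c s k t := by
          rw [← heq, mul_comm, mul_div_assoc, div_self hF2.ne', mul_one]
  -- continuity and positivity at T by two-step induction
  have hmain : ∀ k, k ≤ n → ContinuousAt (Fc n q c s k) T ∧ Lw n q c k * tlo ≤ Fc n q c s k T := by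
    apply twoStep
    · intro _
      refine ⟨by rw [Fc_zero_fun]; exact continuousAt_id, ?_⟩
      rw [Fc_zero, Lw]; nlinarith
    · intro _
      have hcn := hc n hn le_rfl
      have hqn := hq n hn le_rfl
      refine ⟨by rw [Fc_one_fun]; exact (continuousAt_const.mul continuousAt_id).div_const (q n), ?_⟩
      rw [Fc_one, Lw]
      rw [div_mul_eq_mul_div, div_le_div_iff₀ hqn hqn]
      nlinarith [mul_pos hcn hqn]
    · intro k ih1 ih2 hk
      obtain ⟨hcont1, hlow1⟩ := ih1 (by omega)
      obtain ⟨hcont2, hlow2⟩ := ih2 (by omega)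
      -- denominator at T
      have hdcont : ContinuousAt (fun u => q (n-k-1) - s (n-k-1) * Fc n q c s k u) T :=
        continuousAt_const.sub (continuousAt_const.mul hcont1)
      have hdT : c (n-k-1) * (Lw n q c (k+1) * tlo) / Aw r b q c (n-k-2)
          ≤ q (n-k-1) - s (n-k-1) * Fc n q c s k T :=
        le_at_sup (f := fun u => q (n-k-1) - s (n-k-1) * Fc n q c s k u) hdcont htloT
          (fun t h1 h2 => hdlow k (by omega) t h1 h2)
      have hδpos : 0 < c (n-k-1) * (Lw n q c (k+1) * tlo) / Aw r b q c (n-k-2) := by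
        have := Lpos hn hq hc (k+1) (by omega) (q := q) (c := c)
        have := hc (n-k-1) (by omega) (by omega)
        have := Apos hq hc hr hb (n-k-2) (by omega)
        positivity
      have hdTpos : 0 < q (n-k-1) - s (n-k-1) * Fc n q c s k T := lt_of_lt_of_le hδpos hdT
      have hcont : ContinuousAt (Fc n q c s (k+2)) T := by
        rw [Fc_two_fun]
        exact (continuousAt_const.mul hcont2).div
          (continuousAt_const.sub (continuousAt_const.mul hcont1)) hdTpos.ne'
      refine ⟨hcont, ?_⟩
      apply le_at_sup hcont htloT
      intro t h1 h2
      have ht : 0 < t := lt_of_lt_of_le htlo h1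
      have hD := hIlt t ht h2
      have hL := FcLow hn hq hc hs ht hD (k+2) (by omega)
      have hLpos := Lpos hn hq hc (k+2) (by omega) (q := q) (c := c)
      calc Lw n q c (k+2) * tlo ≤ Lw n q c (k+2) * t := mul_le_mul_of_nonneg_left h1 hLpos.le
        _ ≤ Fc n q c s (k+2) t := hL
  -- T is in S with strict margins; find points beyond T
  have hDomT : Dom n q c s T := by
    intro k hk
    obtain ⟨hcont1, _⟩ := hmain k (by omega)
    have hdcont : ContinuousAt (fun u => q (n-k-1) - s (n-k-1) * Fc n q c s k u) T :=
      continuousAt_const.sub (continuousAt_const.mul hcont1)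
    have hdT := le_at_sup (f := fun u => q (n-k-1) - s (n-k-1) * Fc n q c s k u) hdcont htloT
      (fun t h1 h2 => hdlow k hk t h1 h2)
    have hδpos : 0 < c (n-k-1) * (Lw n q c (k+1) * tlo) / Aw r b q c (n-k-2) := by
      have := Lpos hn hq hc (k+1) (by omega) (q := q) (c := c)
      have := hc (n-k-1) (by omega) (by omega)
      have := Apos hq hc hr hb (n-k-2) (by omega)
      positivity
    exact lt_of_lt_of_le hδpos hdT
  have hev : ∀ m, m ≤ n → ∀ᶠ u in 𝓝 T, ∀ k, k + 2 ≤ m →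
      0 < q (n-k-1) - s (n-k-1) * Fc n q c s k u := by
    intro m
    induction m with
    | zero => intro _; filter_upwards with u k hk; omega
    | succ m ih =>
      intro hm
      rcases Nat.lt_or_ge (m+1) 2 with h2 | h2
      · filter_upwards with u k hk; omega
      · have hnew : ∀ᶠ u in 𝓝 T,
            0 < q (n-(m-1)-1) - s (n-(m-1)-1) * Fc n q c s (m-1) u := by
          obtain ⟨hcont1, _⟩ := hmain (m-1) (by omega)
          have hdcont : ContinuousAt (fun u => q (n-(m-1)-1) - s (n-(m-1)-1) * Fc n q c s (m-1) u) T :=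
            continuousAt_const.sub (continuousAt_const.mul hcont1)
          have := hDomT (m-1) (by omega)
          exact hdcont.eventually (eventually_gt_nhds this)
        filter_upwards [ih (by omega), hnew] with u hu1 hu2 k hk
        rcases Nat.lt_or_ge (k+2) (m+1) with hk' | hk'
        · exact hu1 k (by omega)
        · have : k = m - 1 := by omega
          subst this
          exact hu2
  have hfinal : ∀ᶠ u in 𝓝 T, (0 < u ∧ Dom n q c s u) := by
    filter_upwards [hev n le_rfl, eventually_gt_nhds hTpos] with u hu1 hu2
    exact ⟨hu2, fun k hk => hu1 k hk⟩
  have hgt : ∀ᶠ u in 𝓝[>] T, (0 < u ∧ Dom n q c s u) ∧ T < u := by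
    exact (eventually_nhdsWithin_of_eventually_nhds hfinal).and eventually_mem_nhdsWithin
  obtain ⟨u, ⟨huS, hTu⟩⟩ := hgt.exists
  have : u ≤ T := le_csSup hbdd huS
  linarith

/-- The Leslie-Gower food chain of `n+1` levels with all parameters positive has
a unique equilibrium state with all coordinates positive. -/
theorem leslie_gower_chain_unique_equilibrium
    (n : ℕ) (hn : 1 ≤ n) (r b a : ℝ) (q c s : ℕ → ℝ)
    (hr : 0 < r) (hb : 0 < b) (ha : 0 < a)
    (hq : ∀ i, 1 ≤ i → i ≤ n → 0 < q i)
    (hc : ∀ i, 1 ≤ i → i ≤ n → 0 < c i)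
    (hs : ∀ i, 1 ≤ i → i ≤ n - 1 → 0 < s i) :
    ∃! x : Fin (n + 1) → ℝ,
      (∀ i, 0 < x i) ∧
      chainEquilibrium n r b a q c s
        (fun i => if h : i ≤ n then x ⟨i, by omega⟩ else 0) := by
  classical
  obtain ⟨t₁, ht₁, hD₁, hg₁⟩ := exists_ge hn hr hb ha hq hc hs
  set g : ℝ → ℝ := fun t => b * Fc n q c s n t + a * Fc n q c s (n-1) t with hg
  have hgval : 0 < g t₁ := lt_of_lt_of_le hr hg₁
  obtain ⟨t₀, ht₀pos, ht₀lt, ht₀le⟩ :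
      ∃ t₀ : ℝ, 0 < t₀ ∧ t₀ < t₁ ∧ t₀ ≤ t₁ * r / (2 * g t₁) :=
    ⟨min (t₁/2) (t₁ * r / (2 * g t₁)), lt_min (by positivity) (by positivity),
      lt_of_le_of_lt (min_le_left _ _) (by linarith), min_le_right _ _⟩
  have hD₀ : Dom n q c s t₀ := DomMono hn hq hc hs ht₀pos ht₀lt hD₁
  have hg₀ : g t₀ < r := by
    have hrn := Fratio hn hq hc hs ht₀pos ht₀lt.le hD₁ n le_rfl
    have hrn1 := Fratio hn hq hc hs ht₀pos ht₀lt.le hD₁ (n-1) (by omega)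
    have h1 : g t₀ * t₁ ≤ g t₁ * t₀ := by
      simp only [hg]
      nlinarith
    have h2 : t₀ ≤ t₁ * r / (2 * g t₁) := ht₀le
    have h3 : g t₁ * t₀ ≤ t₁ * r / 2 := by
      calc g t₁ * t₀ ≤ g t₁ * (t₁ * r / (2 * g t₁)) := by nlinarith
        _ = t₁ * r / 2 := by field_simp
    have h4 : g t₀ * t₁ ≤ t₁ * r / 2 := le_trans h1 h3
    by_contra hcon
    push_neg at hcon
    have h5 : r * t₁ ≤ g t₀ * t₁ := mul_le_mul_of_nonneg_right hcon ht₁.le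
    have h7 : r * t₁ ≤ t₁ * r / 2 := le_trans h5 h4
    have h8 : 0 < r * t₁ := mul_pos hr ht₁
    linarith
  -- IVT
  have hIcc : ∀ t, t ∈ Set.Icc t₀ t₁ → 0 < t ∧ Dom n q c s t := by
    intro t ⟨h1, h2⟩
    have ht : 0 < t := lt_of_lt_of_le ht₀pos h1
    rcases eq_or_lt_of_le h2 with rfl | hlt
    · exact ⟨ht, hD₁⟩
    · exact ⟨ht, DomMono hn hq hc hs ht hlt hD₁⟩
  have hgc : ContinuousOn g (Set.Icc t₀ t₁) := by
    intro t htmem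
    obtain ⟨ht, hD⟩ := hIcc t htmem
    exact (((continuousAt_const.mul (Fcont hD n le_rfl)).add
      (continuousAt_const.mul (Fcont hD (n-1) (by omega))))).continuousWithinAt
  obtain ⟨tstar, htsmem, hgstar⟩ :=
    intermediate_value_Icc ht₀lt.le hgc ⟨hg₀.le, hg₁⟩
  obtain ⟨hts, hDs⟩ := hIcc tstar htsmem
  -- the equilibrium
  set x : Fin (n+1) → ℝ := fun i => Fc n q c s (n - i.val) tstar with hx
  have hqn := hq n hn le_rfl
  have hcn := hc n hn le_rfl
  refine ⟨x, ⟨fun i => Fpos hn hq hc hts hDs (n - i.val) (by omega), ?_, ?_, ?_⟩, ?_⟩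
  · -- first equation
    show r = b * (if h : (0:ℕ) ≤ n then x ⟨0, by omega⟩ else 0)
        + a * (if h : (1:ℕ) ≤ n then x ⟨1, by omega⟩ else 0)
    rw [dif_pos (by omega : (0:ℕ) ≤ n), dif_pos hn]
    simp only [hx]
    rw [← hgstar]
    simp [hg]
  · -- middle equations
    intro i h1 h2
    have hin : i ≤ n := by omega
    set k := n - i - 1 with hk
    have ek1 : n - i = k + 1 := by omega
    have ek2 : n - (i-1) = k + 2 := by omega
    have ek0 : n - (i+1) = k := by omega
    have ei : n - k - 1 = i := by omega
    show q i = c i * (if h : i ≤ n then x ⟨i, by omega⟩ else 0)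
        / (if h : i - 1 ≤ n then x ⟨i-1, by omega⟩ else 0)
        + s i * (if h : i + 1 ≤ n then x ⟨i+1, by omega⟩ else 0)
    rw [dif_pos hin, dif_pos (by omega : i - 1 ≤ n), dif_pos (by omega : i + 1 ≤ n)]
    simp only [hx, ek1, ek2, ek0]
    have hd : 0 < q i - s i * Fc n q c s k tstar := by
      have := hDs k (by omega); rwa [ei] at this
    have hF1 := Fpos hn hq hc hts hDs (k+1) (by omega)
    have hF2 := Fpos hn hq hc hts hDs (k+2) (by omega)
    have heq : Fc n q c s (k+2) tstar * (q i - s i * Fc n q c s k tstar)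
        = c i * Fc n q c s (k+1) tstar := by
      rw [Fc_two, ei]; field_simp
    have : c i * Fc n q c s (k+1) tstar / Fc n q c s (k+2) tstar
        = q i - s i * Fc n q c s k tstar := by
      rw [← heq, mul_comm, mul_div_assoc, div_self hF2.ne', mul_one]
    rw [this]; ring
  · -- last equation
    show q n = c n * (if h : n ≤ n then x ⟨n, by omega⟩ else 0)
        / (if h : n - 1 ≤ n then x ⟨n-1, by omega⟩ else 0)
    rw [dif_pos le_rfl, dif_pos (by omega : n - 1 ≤ n)]
    simp only [hx]
    rw [show n - n = 0 by omega, show n - (n-1) = 1 by omega, Fc_zero, Fc_one]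
    field_simp
  · -- uniqueness
    intro y hy
    obtain ⟨hypos, he1, he2, he3⟩ := hy
    obtain ⟨Q, hQval⟩ : ∃ Q : ℕ → ℝ, ∀ m (hm : m ≤ n), Q m = y ⟨m, by omega⟩ :=
      ⟨fun m => if h : m ≤ n then y ⟨m, by omega⟩ else 0, fun m hm => dif_pos hm⟩
    have hQpos : ∀ m, m ≤ n → 0 < Q m := by
      intro m hm; rw [hQval m hm]; exact hypos _
    have E1 : r = b * Q 0 + a * Q 1 := by
      have h := he1
      dsimp only at h
      rw [dif_pos (show (0:ℕ) ≤ n by omega), dif_pos (show (1:ℕ) ≤ n by omega)] at h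
      rw [hQval 0 (by omega), hQval 1 hn]
      exact h
    have E3 : q n = c n * Q n / Q (n-1) := by
      have h := he3
      dsimp only at h
      rw [dif_pos (show n ≤ n from le_rfl), dif_pos (show n - 1 ≤ n by omega)] at h
      rw [hQval n le_rfl, hQval (n-1) (by omega)]
      exact h
    have E2 : ∀ i, 1 ≤ i → i ≤ n - 1 →
        q i = c i * Q i / Q (i-1) + s i * Q (i+1) := by
      intro i h1 h2
      have h := he2 i h1 h2
      dsimp only at h
      rw [dif_pos (show i ≤ n by omega), dif_pos (show i - 1 ≤ n by omega),
        dif_pos (show i + 1 ≤ n by omega)] at h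
      rw [hQval i (by omega), hQval (i-1) (by omega), hQval (i+1) (by omega)]
      exact h
    set u : ℝ := Q n with hu
    have hupos : 0 < u := hQpos n le_rfl
    have claim : ∀ j, j ≤ n → Q (n - j) = Fc n q c s j u := by
      apply twoStep
      · intro _; rw [Nat.sub_zero, Fc_zero]
      · intro _
        have hQ1 := hQpos (n-1) (by omega)
        rw [Fc_one]
        have h6 : c n * u / Q (n-1) = q n := E3.symm
        rw [eq_div_iff hqn.ne', ← h6]
        field_simp
      · intro j ih1 ih2 hj
        have h1i : 1 ≤ n - j - 1 := by omega
        have h2i : n - j - 1 ≤ n - 1 := by omega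
        have e2 := E2 (n-j-1) h1i h2i
        have eQ1 : Q (n-j-1) = Fc n q c s (j+1) u := by
          rw [show n - j - 1 = n - (j+1) by omega]; exact ih2 (by omega)
        have eQ0 : Q (n-j-1+1) = Fc n q c s j u := by
          rw [show n - j - 1 + 1 = n - j by omega]; exact ih1 (by omega)
        have hQi1 := hQpos (n-j-1-1) (by omega)
        have hQi := hQpos (n-j-1) (by omega)
        have hci := hc (n-j-1) (by omega) (by omega)
        have hdpos : 0 < q (n-j-1) - s (n-j-1) * Q (n-j-1+1) := by
          have hpos : 0 < c (n-j-1) * Q (n-j-1) / Q (n-j-1-1) := by positivity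
          linarith [e2]
        have h6 : c (n-j-1) * Q (n-j-1) / Q (n-j-1-1)
            = q (n-j-1) - s (n-j-1) * Q (n-j-1+1) := by linarith [e2]
        have h7 : Q (n-j-1-1) = c (n-j-1) * Q (n-j-1) / (q (n-j-1) - s (n-j-1) * Q (n-j-1+1)) := by
          rw [eq_div_iff hdpos.ne', ← h6]
          field_simp
        rw [show n - (j+2) = n - j - 1 - 1 by omega, h7, eQ1, eQ0, Fc_two]
    have hDu : Dom n q c s u := by
      intro k hk
      have h1i : 1 ≤ n - k - 1 := by omega
      have h2i : n - k - 1 ≤ n - 1 := by omega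
      have e2 := E2 (n-k-1) h1i h2i
      have eQ0 : Q (n-k-1+1) = Fc n q c s k u := by
        rw [show n - k - 1 + 1 = n - k by omega]; exact claim k (by omega)
      have hQi1 := hQpos (n-k-1-1) (by omega)
      have hQi := hQpos (n-k-1) (by omega)
      have hci := hc (n-k-1) (by omega) (by omega)
      have hpos : 0 < c (n-k-1) * Q (n-k-1) / Q (n-k-1-1) := by positivity
      rw [← eQ0]
      linarith [e2]
    have hgu : g u = r := by
      have hq0 : Q 0 = Fc n q c s n u := by
        have := claim n le_rfl; rwa [Nat.sub_self] at this
      have hq1 : Q 1 = Fc n q c s (n-1) u := by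
        have := claim (n-1) (by omega); rwa [show n - (n-1) = 1 by omega] at this
      simp only [hg]
      rw [← hq0, ← hq1]
      linarith [E1]
    -- u = tstar by strict monotonicity of g
    have huts : u = tstar := by
      rcases lt_trichotomy u tstar with hlt | heq | hgt
      · have m1 := Fmono hn hq hc hs hupos hlt hDs n le_rfl
        have m2 := Fmono hn hq hc hs hupos hlt hDs (n-1) (by omega)
        have : g u < g tstar := by simp only [hg]; nlinarith
        rw [hgu, hgstar] at this; linarith
      · exact heq
      · have m1 := Fmono hn hq hc hs hts hgt hDu n le_rfl
        have m2 := Fmono hn hq hc hs hts hgt hDu (n-1) (by omega)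
        have : g tstar < g u := by simp only [hg]; nlinarith
        rw [hgu, hgstar] at this; linarith
    funext i
    have hiv : i.val ≤ n := by omega
    have := claim (n - i.val) (by omega)
    rw [show n - (n - i.val) = i.val by omega] at this
    rw [hQval i.val hiv] at this
    have hyx : y ⟨i.val, by omega⟩ = y i := by congr
    rw [hyx] at this
    rw [this, huts]
end

section
/- For the (n+1)-level Leslie-Gower food chain with positive parameters, the orbital derivative of V(H, P₁,...,Pₙ) = ln(H/H*) + H*/H + Σᵢ Bᵢ(ln(Pᵢ/Pᵢ*) + Pᵢ*/Pᵢ) along the flow equals bH*(2 − H*/H − H/H*) + aP₁*(2 − P₁*/P₁ − P₁/P₁*) + Σ_{i=2}^{n} Bᵢ₋₁sᵢ₋₁Pᵢ*(2 − Pᵢ*/Pᵢ − Pᵢ/Pᵢ*) at every point with all coordinates positive. -/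
/-- The orbital derivative of the Lyapunov function
`V = log(H/H*) + H*/H + ∑ᵢ Bᵢ(log(Pᵢ/Pᵢ*) + Pᵢ*/Pᵢ)` along the
`n+1` level Leslie-Gower food chain equals
`bH*(2 − H*/H − H/H*) + aP₁*(2 − P₁*/P₁ − P₁/P₁*)
  + ∑_{i=2}^{n} Bᵢ₋₁sᵢ₋₁Pᵢ*(2 − Pᵢ*/Pᵢ − Pᵢ/Pᵢ*)`.
Here `P 0 = H`, `Ps 0 = H*`. -/
theorem leslie_gower_chain_orbital_derivative
    (n : ℕ) (hn : 1 ≤ n) (r b a : ℝ) (q c s Ps B P : ℕ → ℝ)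
    (hr : 0 < r) (hb : 0 < b) (ha : 0 < a)
    (hq : ∀ i, 1 ≤ i → i ≤ n → 0 < q i)
    (hc : ∀ i, 1 ≤ i → i ≤ n → 0 < c i)
    (hs : ∀ i, 1 ≤ i → i ≤ n - 1 → 0 < s i)
    (hPs : ∀ i, i ≤ n → 0 < Ps i)
    (hP : ∀ i, i ≤ n → 0 < P i)
    (heq0 : r = b * Ps 0 + a * Ps 1)
    (heq : ∀ i, 1 ≤ i → i ≤ n - 1 → q i = c i * Ps i / Ps (i - 1) + s i * Ps (i + 1))
    (heqn : q n = c n * Ps n / Ps (n - 1))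
    (hB1 : B 1 * c 1 = a * Ps 0)
    (hBrec : ∀ i, 2 ≤ i → i ≤ n → B i * c i = B (i - 1) * s (i - 1) * Ps (i - 1)) :
    (1 / P 0 - Ps 0 / (P 0) ^ 2) * ((r - b * P 0 - a * P 1) * P 0)
      + ∑ i ∈ Finset.Icc 1 n, B i * (1 / P i - Ps i / (P i) ^ 2) *
          ((q i - c i * P i / P (i - 1)
              - (if i = n then 0 else s i * P (i + 1))) * P i)
      = b * Ps 0 * (2 - Ps 0 / P 0 - P 0 / Ps 0)
        + a * Ps 1 * (2 - Ps 1 / P 1 - P 1 / Ps 1)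
        + ∑ i ∈ Finset.Icc 2 n,
            B (i - 1) * s (i - 1) * Ps i * (2 - Ps i / P i - P i / Ps i) := by
  have hP0 : P 0 ≠ 0 := (hP 0 (by omega)).ne'
  have hP1 : P 1 ≠ 0 := (hP 1 hn).ne'
  have hPs0 : Ps 0 ≠ 0 := (hPs 0 (by omega)).ne'
  have hPs1 : Ps 1 ≠ 0 := (hPs 1 hn).ne'
  set g : ℕ → ℝ := fun i =>
    B i * c i * (Ps i / Ps (i-1) - P i / P (i-1)) * (P i - Ps i) / P i with hg
  set x : ℕ → ℝ := fun i =>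
    B i * s i * (P i - Ps i) * (P (i+1) - Ps (i+1)) / P i with hx
  have step1 : ∀ i ∈ Finset.Icc 1 n,
      B i * (1 / P i - Ps i / (P i) ^ 2) *
        ((q i - c i * P i / P (i - 1) - (if i = n then 0 else s i * P (i + 1))) * P i)
      = g i - (if i = n then 0 else x i) := by
    intro i hi
    simp only [Finset.mem_Icc] at hi
    have hPi : P i ≠ 0 := (hP i hi.2).ne'
    have hPim : P (i-1) ≠ 0 := (hP (i-1) (by omega)).ne'
    have hPsim : Ps (i-1) ≠ 0 := (hPs (i-1) (by omega)).ne'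
    by_cases h : i = n
    · subst h
      rw [heqn]
      simp only [if_pos rfl, hg, eq_self_iff_true, ↓reduceIte]
      field_simp
      ring
    · rw [heq i hi.1 (by omega)]
      simp only [if_neg h, hg, hx]
      field_simp
      ring
  rw [Finset.sum_congr rfl step1, Finset.sum_sub_distrib]
  have hite : ∑ i ∈ Finset.Icc 1 n, (if i = n then (0:ℝ) else x i)
      = ∑ i ∈ Finset.Icc 1 (n-1), x i := by
    have hins : Finset.Icc 1 n = insert n (Finset.Icc 1 (n-1)) := by
      ext j; simp [Finset.mem_Icc, Finset.mem_insert]; omega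
    rw [hins, Finset.sum_insert (by simp [Finset.mem_Icc]; omega)]
    rw [if_pos rfl, zero_add]
    apply Finset.sum_congr rfl
    intro i hi
    simp only [Finset.mem_Icc] at hi
    rw [if_neg (by omega)]
  have hreindex : ∑ i ∈ Finset.Icc 1 (n-1), x i
      = ∑ i ∈ Finset.Icc 2 n, x (i-1) := by
    rw [show Finset.Icc 2 n = (Finset.Icc 1 (n-1)).map (addRightEmbedding 1) by
      rw [Finset.map_add_right_Icc]; congr 1; omega]
    rw [Finset.sum_map]
    simp [addRightEmbedding]
  have hsplitg : ∑ i ∈ Finset.Icc 1 n, g i = g 1 + ∑ i ∈ Finset.Icc 2 n, g i := by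
    rw [show Finset.Icc 1 n = insert 1 (Finset.Icc 2 n) by
      ext j; simp [Finset.mem_Icc, Finset.mem_insert]; omega]
    rw [Finset.sum_insert (by simp [Finset.mem_Icc])]
  have hstepC : ∀ i ∈ Finset.Icc 2 n, g i - x (i-1)
      = B (i - 1) * s (i - 1) * Ps i * (2 - Ps i / P i - P i / Ps i) := by
    intro i hi
    simp only [Finset.mem_Icc] at hi
    have hPi : P i ≠ 0 := (hP i hi.2).ne'
    have hPim : P (i-1) ≠ 0 := (hP (i-1) (by omega)).ne'
    have hPsim : Ps (i-1) ≠ 0 := (hPs (i-1) (by omega)).ne'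
    have hPsi : Ps i ≠ 0 := (hPs i hi.2).ne'
    have him : i - 1 + 1 = i := by omega
    simp only [hg, hx, him, hBrec i hi.1 hi.2]
    field_simp
    ring
  have hH : (1 / P 0 - Ps 0 / (P 0) ^ 2) * ((r - b * P 0 - a * P 1) * P 0) + g 1
      = b * Ps 0 * (2 - Ps 0 / P 0 - P 0 / Ps 0)
        + a * Ps 1 * (2 - Ps 1 / P 1 - P 1 / Ps 1) := by
    simp only [hg, heq0, hB1]
    have : (1:ℕ) - 1 = 0 := rfl
    rw [this]
    field_simp
    ring
  rw [hite, hreindex, hsplitg]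
  rw [← Finset.sum_congr rfl hstepC, Finset.sum_sub_distrib]
  linarith [hH]
end

section
/- For the (n+1)-level Leslie-Gower food chain, the orbital derivative of the Lyapunov function V is strictly negative at every point of the open positive orthant except the positive equilibrium Q*ₙ, where it vanishes; consequently Q*ₙ is the unique equilibrium in the open positive orthant. -/
/-- auxiliary: the "cross" term carried from level `i` to level `i+1`. -/
noncomputable def lgCross (n : ℕ) (X Ps P : ℕ → ℝ) (i : ℕ) : ℝ :=
  if i = n then 0 else -(X i * (P i - Ps i) * (P (i + 1) - Ps (i + 1)) / P i)

/-- auxiliary: the "competition" part of the `i`-th term. -/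
noncomputable def lgCpart (X Ps P : ℕ → ℝ) (i : ℕ) : ℝ :=
  X (i - 1) * (P i - Ps i) *
    (Ps i * (P (i - 1) - Ps (i - 1)) - Ps (i - 1) * (P i - Ps i)) / (P (i - 1) * P i)

theorem lg_sum_shift (m : ℕ) (f : ℕ → ℝ) :
    ∑ i ∈ Finset.Icc 1 m, f i = ∑ i ∈ Finset.range m, f (i + 1) := by
  induction m with
  | zero => simp
  | succ k ih => rw [Finset.sum_Icc_succ_top (by omega), ih, Finset.sum_range_succ]

/-- The orbital derivative of the Lyapunov function of the `n+1` level
Leslie-Gower food chain is strictly negative at every point of the open positive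
orthant other than the positive equilibrium, where it vanishes; consequently the
positive equilibrium is the unique equilibrium in the open positive orthant.
Here `P 0 = H`, `Ps 0 = H*`. -/
theorem leslie_gower_chain_lyapunov_neg
    (n : ℕ) (hn : 1 ≤ n) (r b a : ℝ) (q c s Ps B : ℕ → ℝ)
    (hr : 0 < r) (hb : 0 < b) (ha : 0 < a)
    (hq : ∀ i, 1 ≤ i → i ≤ n → 0 < q i)
    (hc : ∀ i, 1 ≤ i → i ≤ n → 0 < c i)
    (hs : ∀ i, 1 ≤ i → i ≤ n - 1 → 0 < s i)
    (hPs : ∀ i, i ≤ n → 0 < Ps i)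
    (heq0 : r = b * Ps 0 + a * Ps 1)
    (heq : ∀ i, 1 ≤ i → i ≤ n - 1 → q i = c i * Ps i / Ps (i - 1) + s i * Ps (i + 1))
    (heqn : q n = c n * Ps n / Ps (n - 1))
    (hB1 : B 1 * c 1 = a * Ps 0)
    (hBrec : ∀ i, 2 ≤ i → i ≤ n → B i * c i = B (i - 1) * s (i - 1) * Ps (i - 1)) :
    let D : (ℕ → ℝ) → ℝ := fun P =>
      (1 / P 0 - Ps 0 / (P 0) ^ 2) * ((r - b * P 0 - a * P 1) * P 0)
        + ∑ i ∈ Finset.Icc 1 n, B i * (1 / P i - Ps i / (P i) ^ 2) *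
            ((q i - c i * P i / P (i - 1)
                - (if i = n then 0 else s i * P (i + 1))) * P i)
    (∀ P : ℕ → ℝ, (∀ i, i ≤ n → 0 < P i) → (∃ i ≤ n, P i ≠ Ps i) → D P < 0) ∧
    D Ps = 0 ∧
    (∀ P : ℕ → ℝ, (∀ i, i ≤ n → 0 < P i) →
      (r - b * P 0 - a * P 1) * P 0 = 0 →
      (∀ i, 1 ≤ i → i ≤ n →
        (q i - c i * P i / P (i - 1)
            - (if i = n then 0 else s i * P (i + 1))) * P i = 0) →
      ∀ i, i ≤ n → P i = Ps i) := by
  intro D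
  have hn0 : n ≠ 0 := by omega
  set X : ℕ → ℝ := fun j => if j = 0 then a else B j * s j with hX
  have hX0 : X 0 = a := if_pos rfl
  have hXeq : ∀ j, 1 ≤ j → X j = B j * s j := fun j h => if_neg (by omega)
  have hBpos : ∀ i, 1 ≤ i → i ≤ n → 0 < B i := by
    intro i
    induction i with
    | zero => omega
    | succ j ih =>
      intro _ h2
      rcases Nat.eq_zero_or_pos j with rfl | hj
      · have hc1 : 0 < c 1 := hc 1 le_rfl (by omega)
        have : B 1 = a * Ps 0 / c 1 := by rw [eq_div_iff hc1.ne']; exact hB1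
        rw [this]; exact div_pos (mul_pos ha (hPs 0 (by omega))) hc1
      · have hrec := hBrec (j + 1) (by omega) h2
        simp only [Nat.add_sub_cancel] at hrec
        have hcj : 0 < c (j + 1) := hc (j + 1) (by omega) h2
        have : B (j + 1) = B j * s j * Ps j / c (j + 1) := by
          rw [eq_div_iff hcj.ne']; exact hrec
        rw [this]
        exact div_pos (mul_pos (mul_pos (ih hj (by omega)) (hs j hj (by omega)))
          (hPs j (by omega))) hcj
  have hXpos : ∀ j, j ≤ n - 1 → 0 < X j := by
    intro j hj
    rcases Nat.eq_zero_or_pos j with rfl | h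
    · rw [hX0]; exact ha
    · rw [hXeq j h]; exact mul_pos (hBpos j h (by omega)) (hs j h hj)
  have key : ∀ P : ℕ → ℝ, (∀ i, i ≤ n → 0 < P i) →
      D P = -(b * (P 0 - Ps 0) ^ 2 / P 0)
            - ∑ i ∈ Finset.Icc 1 n, X (i - 1) * (P i - Ps i) ^ 2 / P i := by
    intro P hP
    have hPne : ∀ i, i ≤ n → P i ≠ 0 := fun i h => (hP i h).ne'
    have hPsne : ∀ i, i ≤ n → Ps i ≠ 0 := fun i h => (hPs i h).ne'
    have hterm : ∀ i ∈ Finset.Icc 1 n,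
        B i * (1 / P i - Ps i / (P i) ^ 2) *
          ((q i - c i * P i / P (i - 1) - (if i = n then 0 else s i * P (i + 1))) * P i)
        = lgCpart X Ps P i + lgCross n X Ps P i := by
      intro i hi
      simp only [Finset.mem_Icc] at hi
      obtain ⟨j, rfl⟩ : ∃ j, i = j + 1 := ⟨i - 1, by omega⟩
      have hPj : P j ≠ 0 := hPne j (by omega)
      have hPj1 : P (j + 1) ≠ 0 := hPne (j + 1) hi.2
      have hPsj : Ps j ≠ 0 := hPsne j (by omega)
      have hcj : c (j + 1) ≠ 0 := (hc (j + 1) (by omega) hi.2).ne'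
      have hBC : B (j + 1) * c (j + 1) = X j * Ps j := by
        rcases Nat.eq_zero_or_pos j with rfl | hj
        · rw [hX0]; exact hB1
        · rw [hXeq j hj]
          have := hBrec (j + 1) (by omega) hi.2
          simpa using this
      have hBval : B (j + 1) = X j * Ps j / c (j + 1) := by
        rw [eq_div_iff hcj]; exact hBC
      by_cases hjn : j + 1 = n
      · subst hjn
        simp only [Nat.add_sub_cancel] at heqn
        simp only [lgCpart, lgCross, Nat.add_sub_cancel, if_pos rfl, ↓reduceIte]
        rw [heqn, hBval]
        field_simp
        ring
      · have hq' := heq (j + 1) (by omega) (by omega)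
        simp only [Nat.add_sub_cancel] at hq'
        simp only [lgCpart, lgCross, Nat.add_sub_cancel, if_neg hjn,
          hXeq (j + 1) (by omega)]
        rw [hq', hBval]
        field_simp
        ring
    have h0 : (1 / P 0 - Ps 0 / (P 0) ^ 2) * ((r - b * P 0 - a * P 1) * P 0)
        = -(b * (P 0 - Ps 0) ^ 2 / P 0) + lgCross n X Ps P 0 := by
      have hP0 : P 0 ≠ 0 := hPne 0 (by omega)
      simp only [lgCross, if_neg (show (0 : ℕ) ≠ n from fun h => hn0 h.symm), hX0]
      rw [heq0]
      field_simp
      ring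
    have hcomb : ∀ i ∈ Finset.Icc 1 n,
        lgCpart X Ps P i + lgCross n X Ps P (i - 1)
        = -(X (i - 1) * (P i - Ps i) ^ 2 / P i) := by
      intro i hi
      simp only [Finset.mem_Icc] at hi
      obtain ⟨j, rfl⟩ : ∃ j, i = j + 1 := ⟨i - 1, by omega⟩
      have hPj : P j ≠ 0 := hPne j (by omega)
      have hPj1 : P (j + 1) ≠ 0 := hPne (j + 1) hi.2
      simp only [lgCpart, lgCross, Nat.add_sub_cancel,
        if_neg (show j ≠ n by omega)]
      field_simp
      ring
    have hgn : lgCross n X Ps P n = 0 := if_pos rfl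
    have hshift : lgCross n X Ps P 0 + ∑ i ∈ Finset.Icc 1 n, lgCross n X Ps P i
        = ∑ i ∈ Finset.Icc 1 n, lgCross n X Ps P (i - 1) := by
      rw [lg_sum_shift n (fun i => lgCross n X Ps P i),
        lg_sum_shift n (fun i => lgCross n X Ps P (i - 1))]
      simp only [Nat.add_sub_cancel]
      calc lgCross n X Ps P 0 + ∑ i ∈ Finset.range n, lgCross n X Ps P (i + 1)
          = ∑ i ∈ Finset.range (n + 1), lgCross n X Ps P i := by
            rw [Finset.sum_range_succ']; ring
        _ = ∑ i ∈ Finset.range n, lgCross n X Ps P i := by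
            rw [Finset.sum_range_succ, hgn, add_zero]
    have hDP : D P = (1 / P 0 - Ps 0 / (P 0) ^ 2) * ((r - b * P 0 - a * P 1) * P 0)
        + ∑ i ∈ Finset.Icc 1 n, B i * (1 / P i - Ps i / (P i) ^ 2) *
            ((q i - c i * P i / P (i - 1)
                - (if i = n then 0 else s i * P (i + 1))) * P i) := rfl
    rw [hDP, h0, Finset.sum_congr rfl hterm, Finset.sum_add_distrib]
    have hsum2 : ∑ i ∈ Finset.Icc 1 n, lgCpart X Ps P i
        + (lgCross n X Ps P 0 + ∑ i ∈ Finset.Icc 1 n, lgCross n X Ps P i)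
        = ∑ i ∈ Finset.Icc 1 n, -(X (i - 1) * (P i - Ps i) ^ 2 / P i) := by
      rw [hshift, ← Finset.sum_add_distrib]
      exact Finset.sum_congr rfl hcomb
    rw [Finset.sum_neg_distrib] at hsum2
    linarith
  have main : ∀ P : ℕ → ℝ, (∀ i, i ≤ n → 0 < P i) →
      (∃ i ≤ n, P i ≠ Ps i) → D P < 0 := by
    rintro P hP ⟨j, hj, hne⟩
    rw [key P hP]
    have hnonneg : ∀ i ∈ Finset.Icc 1 n, 0 ≤ X (i - 1) * (P i - Ps i) ^ 2 / P i := by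
      intro i hi
      simp only [Finset.mem_Icc] at hi
      exact div_nonneg (mul_nonneg (hXpos (i - 1) (by omega)).le (sq_nonneg _))
        (hP i hi.2).le
    have hsq : ∀ i, P i ≠ Ps i → 0 < (P i - Ps i) ^ 2 :=
      fun i h => sq_pos_of_ne_zero (sub_ne_zero.mpr h)
    rcases Nat.eq_zero_or_pos j with rfl | hj1
    · have h1 : 0 < b * (P 0 - Ps 0) ^ 2 / P 0 :=
        div_pos (mul_pos hb (hsq 0 hne)) (hP 0 (by omega))
      have h2 : 0 ≤ ∑ i ∈ Finset.Icc 1 n, X (i - 1) * (P i - Ps i) ^ 2 / P i :=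
        Finset.sum_nonneg hnonneg
      linarith
    · have hjmem : j ∈ Finset.Icc 1 n := Finset.mem_Icc.mpr ⟨hj1, hj⟩
      have hpos : 0 < X (j - 1) * (P j - Ps j) ^ 2 / P j :=
        div_pos (mul_pos (hXpos (j - 1) (by omega)) (hsq j hne)) (hP j hj)
      have hS : 0 < ∑ i ∈ Finset.Icc 1 n, X (i - 1) * (P i - Ps i) ^ 2 / P i :=
        Finset.sum_pos' hnonneg ⟨j, hjmem, hpos⟩
      have hA : 0 ≤ b * (P 0 - Ps 0) ^ 2 / P 0 :=
        div_nonneg (mul_nonneg hb.le (sq_nonneg _)) (hP 0 (by omega)).le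
      linarith
  have hzero : D Ps = 0 := by
    rw [key Ps (fun i h => hPs i h)]
    simp
  refine ⟨main, hzero, ?_⟩
  intro P hP h0eq hrest i hi
  by_contra hne
  have hDP0 : D P = 0 := by
    have hDP : D P = (1 / P 0 - Ps 0 / (P 0) ^ 2) * ((r - b * P 0 - a * P 1) * P 0)
        + ∑ k ∈ Finset.Icc 1 n, B k * (1 / P k - Ps k / (P k) ^ 2) *
            ((q k - c k * P k / P (k - 1)
                - (if k = n then 0 else s k * P (k + 1))) * P k) := rfl
    rw [hDP, h0eq]
    simp only [mul_zero, zero_add]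
    refine Finset.sum_eq_zero fun k hk => ?_
    simp only [Finset.mem_Icc] at hk
    rw [hrest k hk.1 hk.2, mul_zero]
  have := main P hP ⟨i, hi, hne⟩
  linarith
end
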